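/- arXiv:1501.02042 — 12 statements merged into one kernel-verified Lean document; each statement's English description precedes it below -/
import Mathlib

section
/- Let λ ∈ ℝ with λ ∉ 𝒩 and let μ ∈ ℂ. Suppose φ : [0,1] → ℂ is four times continuously differentiable and satisfies φ''''(x) + λ φ''(x) = μ φ(x) for all x ∈ [0,1], together with the five boundary conditions φ(0) = φ(1) = φ'(0) = φ''(0) = φ''(1) = 0. Then φ is identically zero. -/
/-!
Choose `a, b` with `a + b = -λ`, `a b = -μ`, so that `∂⁴ + λ∂² - μ = (∂² - a)(∂² - b)`.
Then `ψ = φ'' - aφ` and `χ = φ'' - bφ` satisfy `ψ'' = bψ`, `χ'' = aχ`, vanish at `0` and `1`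
and have the common slope `φ'''(0)` at `0`. If this slope were nonzero, `a` and `b` would be
Dirichlet eigenvalues `-(jπ)²` and `-(kπ)²`, whence `λ = (j² + k²)π²`. This is excluded for
`j ≠ k`; for `j = k` the resonant problem `φ'' - aφ = ψ`, `φ(0) = φ'(0) = φ(1) = 0` forces
`ψ'(0) = 0`. So `φ'''(0) = 0`, hence `ψ ≡ 0`, and then `φ'' = aφ` with zero Cauchy data
gives `φ ≡ 0`.
-/

open Real Set

theorem exists_add_eq_and_mul_eq (p q : ℂ) : ∃ a b : ℂ, a + b = p ∧ a * b = q := by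
  obtain ⟨δ, hδ⟩ := IsAlgClosed.exists_pow_nat_eq (p ^ 2 - 4 * q) two_pos
  exact ⟨(p + δ) / 2, (p - δ) / 2, by ring, by linear_combination (-1 / 4 : ℂ) * hδ⟩

theorem ContDiffOn.hasDerivWithinAt_iteratedDerivWithin {𝕜 F : Type*}
    [NontriviallyNormedField 𝕜] [NormedAddCommGroup F] [NormedSpace 𝕜 F] {n : WithTop ℕ∞}
    {f : 𝕜 → F} {s : Set 𝕜} {x : 𝕜} {k : ℕ} (hf : ContDiffOn 𝕜 n f s) (hs : UniqueDiffOn 𝕜 s)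
    (hk : k < n) (hx : x ∈ s) :
    HasDerivWithinAt (iteratedDerivWithin k f s) (iteratedDerivWithin (k + 1) f s x) s x := by
  rw [iteratedDerivWithin_succ]
  exact (hf.differentiableOn_iteratedDerivWithin hk hs x hx).hasDerivWithinAt

theorem exists_sq_eq_neg_sq_mul_pi_sq_of_sinh_eq_zero {ω : ℂ} (h : Complex.sinh ω = 0)
    (hω : ω ≠ 0) : ∃ n : ℕ+, ω ^ 2 = -((n : ℂ) * π) ^ 2 := by
  obtain ⟨k, hk⟩ := Complex.sin_eq_zero_iff.mp (by rw [Complex.sin_mul_I, h, zero_mul] :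
    Complex.sin (ω * Complex.I) = 0)
  have hk0 : k ≠ 0 := by
    rintro rfl
    simp [hω] at hk
  refine ⟨⟨k.natAbs, Int.natAbs_pos.mpr hk0⟩, ?_⟩
  have hcast : ((k.natAbs : ℕ) : ℂ) ^ 2 = (k : ℂ) ^ 2 := by
    rw [← Int.cast_natCast, ← Int.cast_pow, Int.natAbs_sq, Int.cast_pow]
  have hsq : ω ^ 2 = -(ω * Complex.I) ^ 2 := by linear_combination ω ^ 2 * Complex.I_sq
  rw [hsq, hk, PNat.mk_coe, mul_pow, mul_pow, hcast]

def IsSecondOrderSol (c : ℂ) (s : Set ℝ) (u v : ℝ → ℂ) : Prop :=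
  ∀ x ∈ s, HasDerivWithinAt u (v x) s x ∧ HasDerivWithinAt v (c * u x) s x

theorem isSecondOrderSol_ofReal (s : Set ℝ) :
    IsSecondOrderSol 0 s (fun x => (x : ℂ)) 1 := fun x _ =>
  ⟨Complex.ofRealCLM.hasDerivAt.hasDerivWithinAt.congr_deriv (by simp),
    (hasDerivWithinAt_const x s (1 : ℂ)).congr_deriv (by simp)⟩

theorem isSecondOrderSol_sinh {ω : ℂ} (hω : ω ≠ 0) (s : Set ℝ) :
    IsSecondOrderSol (ω ^ 2) s (fun x => Complex.sinh (ω * x) / ω)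
      (fun x => Complex.cosh (ω * x)) := by
  intro x _
  have hlin : HasDerivAt (fun x : ℝ => ω * x) ω x := by
    simpa using (hasDerivAt_id x).ofReal_comp.const_mul ω
  constructor
  · refine (((Complex.hasDerivAt_sinh _).comp x hlin).div_const ω).hasDerivWithinAt.congr_deriv ?_
    field_simp
  · refine ((Complex.hasDerivAt_cosh _).comp x hlin).hasDerivWithinAt.congr_deriv ?_
    field_simp

namespace IsSecondOrderSol

variable {c : ℂ} {s : Set ℝ} {u v u₁ v₁ : ℝ → ℂ}

theorem sub (h : IsSecondOrderSol c s u v) (h₁ : IsSecondOrderSol c s u₁ v₁) :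
    IsSecondOrderSol c s (u - u₁) (v - v₁) := fun x hx =>
  ⟨(h x hx).1.sub (h₁ x hx).1,
    by simpa only [Pi.sub_apply, mul_sub] using (h x hx).2.sub (h₁ x hx).2⟩

theorem const_mul (d : ℂ) (h : IsSecondOrderSol c s u v) :
    IsSecondOrderSol c s (fun x => d * u x) (fun x => d * v x) := fun x hx =>
  ⟨(h x hx).1.const_mul d, by simpa only [mul_left_comm] using (h x hx).2.const_mul d⟩

theorem eqOn_zero {a b : ℝ} (h : IsSecondOrderSol c (Icc a b) u v) (hu : u a = 0)
    (hv : v a = 0) : EqOn u 0 (Icc a b) := by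
  let L : ℂ × ℂ →L[ℂ] ℂ × ℂ :=
    (ContinuousLinearMap.snd ℂ ℂ ℂ).prod (c • ContinuousLinearMap.fst ℂ ℂ ℂ)
  have hsol : ∀ x ∈ Icc a b,
      HasDerivWithinAt (fun x => (u x, v x)) (L (u x, v x)) (Icc a b) x :=
    fun x hx => (h x hx).1.prodMk (h x hx).2
  have hzero : EqOn (fun x => (u x, v x)) 0 (Icc a b) := by
    refine ODE_solution_unique (v := fun _ => L) (fun _ => L.lipschitz)
      (fun x hx => (hsol x hx).continuousWithinAt) (fun t ht => ?_)
      continuousOn_const (fun t _ => by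
        simp only [Pi.zero_apply, map_zero]; exact hasDerivWithinAt_const t _ _)
      (by simp [hu, hv])
    exact (hsol t (Ico_subset_Icc_self ht)).mono_of_mem_nhdsWithin (Icc_mem_nhdsGE_of_mem ht)
  exact fun _ hx => congrArg Prod.fst (hzero hx)

theorem eqOn {a b : ℝ} (h : IsSecondOrderSol c (Icc a b) u v)
    (h₁ : IsSecondOrderSol c (Icc a b) u₁ v₁) (hu : u a = u₁ a) (hv : v a = v₁ a) :
    EqOn u u₁ (Icc a b) := fun _ hx =>
  sub_eq_zero.mp ((h.sub h₁).eqOn_zero (sub_eq_zero.mpr hu) (sub_eq_zero.mpr hv) hx)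

theorem energy_eq {a b : ℝ} (h : IsSecondOrderSol c (Icc a b) u v) {x : ℝ}
    (hx : x ∈ Icc a b) : v x ^ 2 - c * u x ^ 2 = v a ^ 2 - c * u a ^ 2 := by
  have hE : ∀ t ∈ Icc a b, HasDerivWithinAt (fun t => v t ^ 2 - c * u t ^ 2) 0 (Icc a b) t := by
    intro t ht
    refine (((h t ht).2.fun_pow 2).fun_sub (((h t ht).1.fun_pow 2).const_mul c)).congr_deriv ?_
    push_cast
    ring
  simpa [sub_eq_zero] using
    norm_image_sub_le_of_norm_deriv_le_segment' hE (fun _ _ => norm_zero.le) x hx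

/-- `2c u - ((x - a) ψ' - ψ)` solves `w'' = c w` with zero Cauchy data at `a`, so `ψ'(b) = 0`;
conservation of `ψ'² - c ψ²` carries this back to `a`. -/
theorem deriv_eq_zero_of_resonant {a b : ℝ} (hab : a < b) {ψ ψ' u u' : ℝ → ℂ}
    (hψ : IsSecondOrderSol c (Icc a b) ψ ψ') (hψa : ψ a = 0) (hψb : ψ b = 0)
    (hu : ∀ x ∈ Icc a b, HasDerivWithinAt u (u' x) (Icc a b) x ∧
      HasDerivWithinAt u' (c * u x + ψ x) (Icc a b) x)
    (hua : u a = 0) (hu'a : u' a = 0) (hub : u b = 0) : ψ' a = 0 := by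
  have hw : IsSecondOrderSol c (Icc a b) (fun x => 2 * c * u x - ((x - a : ℝ) * ψ' x - ψ x))
      (fun x => 2 * c * u' x - c * (x - a : ℝ) * ψ x) := by
    intro x hx
    have hlin : HasDerivWithinAt (fun x : ℝ => ((x - a : ℝ) : ℂ)) 1 (Icc a b) x := by
      simpa using ((hasDerivAt_id x).sub_const a).hasDerivWithinAt.ofReal_comp
    constructor
    · refine (((hu x hx).1.const_mul (2 * c)).sub ((hlin.mul (hψ x hx).2).sub (hψ x hx).1))
        |>.congr_deriv ?_
      ring
    · refine (((hu x hx).2.const_mul (2 * c)).sub ((hlin.const_mul c).mul (hψ x hx).1))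
        |>.congr_deriv ?_
      ring
  have hψ'b : ψ' b = 0 := by
    have := hw.eqOn_zero (by simp [hua, hψa]) (by simp [hu'a]) (right_mem_Icc.2 hab.le)
    simpa [hub, hψb, sub_eq_zero, hab.ne'] using this
  have := hψ.energy_eq (right_mem_Icc.2 hab.le)
  simp only [hψa, hψb, hψ'b] at this
  exact pow_eq_zero_iff two_ne_zero |>.mp (by linear_combination -this)

theorem exists_eq_neg_sq_mul_pi_sq (h : IsSecondOrderSol c (Icc 0 1) u v) (h0 : u 0 = 0)
    (h1 : u 1 = 0) (hv : v 0 ≠ 0) : ∃ n : ℕ+, c = -((n : ℂ) * π) ^ 2 := by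
  obtain ⟨ω, rfl⟩ := IsAlgClosed.exists_pow_nat_eq c two_pos
  have h1mem : (1 : ℝ) ∈ Icc 0 1 := right_mem_Icc.2 zero_le_one
  rcases eq_or_ne ω 0 with rfl | hω
  · rw [zero_pow two_ne_zero] at h
    have := h.eqOn ((isSecondOrderSol_ofReal _).const_mul (v 0)) (by simp [h0]) (by simp) h1mem
    simp only [h1, Complex.ofReal_one, mul_one] at this
    exact absurd this.symm hv
  · have := h.eqOn ((isSecondOrderSol_sinh hω _).const_mul (v 0)) (by simp [h0]) (by simp) h1mem
    have hsinh : Complex.sinh ω = 0 := by simpa [h1, hω, hv] using this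
    exact exists_sq_eq_neg_sq_mul_pi_sq_of_sinh_eq_zero hsinh hω

end IsSecondOrderSol

def sumDistinctDirichletEigenvalues : Set ℝ :=
  {x : ℝ | ∃ j k : ℕ+, j ≠ k ∧ x = (j : ℝ) ^ 2 * π ^ 2 + (k : ℝ) ^ 2 * π ^ 2}

def IsFourthOrderSol (lam mu : ℂ) (s : Set ℝ) (f : ℕ → ℝ → ℂ) : Prop :=
  ∀ x ∈ s, (∀ k < 3, HasDerivWithinAt (f k) (f (k + 1) x) s x) ∧
    HasDerivWithinAt (f 3) (mu * f 0 x - lam * f 2 x) s x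

namespace IsFourthOrderSol

variable {lam mu : ℂ} {f : ℕ → ℝ → ℂ}

theorem isSecondOrderSol {s : Set ℝ} {a b : ℂ} (h : IsFourthOrderSol lam mu s f)
    (hsum : a + b = -lam) (hprod : a * b = -mu) :
    IsSecondOrderSol b s (fun x => f 2 x - a * f 0 x) (fun x => f 3 x - a * f 1 x) :=
  fun x hx =>
  ⟨((h x hx).1 2 (by norm_num)).sub (((h x hx).1 0 (by norm_num)).const_mul a),
    ((h x hx).2.sub (((h x hx).1 1 (by norm_num)).const_mul a)).congr_deriv
      (by linear_combination f 0 x * hprod - f 2 x * hsum)⟩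

theorem third_eq_zero {lam : ℝ} (hlam : lam ∉ sumDistinctDirichletEigenvalues)
    (h : IsFourthOrderSol lam mu (Icc 0 1) f) {a b : ℂ} (hsum : a + b = -lam)
    (hprod : a * b = -mu) (h00 : f 0 0 = 0) (h01 : f 0 1 = 0) (h10 : f 1 0 = 0)
    (h20 : f 2 0 = 0) (h21 : f 2 1 = 0) : f 3 0 = 0 := by
  have hψ := h.isSecondOrderSol hsum hprod
  have hχ := h.isSecondOrderSol (a := b) (b := a) (by rwa [add_comm]) (by rwa [mul_comm])
  by_contra hd
  obtain ⟨k, hk⟩ := hψ.exists_eq_neg_sq_mul_pi_sq (by simp [h00, h20]) (by simp [h01, h21])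
    (by simpa [h10] using hd)
  obtain ⟨j, hj⟩ := hχ.exists_eq_neg_sq_mul_pi_sq (by simp [h00, h20]) (by simp [h01, h21])
    (by simpa [h10] using hd)
  rcases eq_or_ne j k with rfl | hjk
  · obtain rfl : a = b := hj.trans hk.symm
    have hres := hψ.deriv_eq_zero_of_resonant zero_lt_one (by simp [h00, h20])
      (by simp [h01, h21])
      (fun x hx => ⟨(h x hx).1 0 (by norm_num),
        ((h x hx).1 1 (by norm_num)).congr_deriv (by ring)⟩) h00 h10 h01
    exact hd (by simpa [h10] using hres)
  · refine hlam ⟨j, k, hjk, Complex.ofReal_injective ?_⟩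
    push_cast
    linear_combination hsum - hj - hk

theorem eqOn_zero {lam : ℝ} (hlam : lam ∉ sumDistinctDirichletEigenvalues)
    (h : IsFourthOrderSol lam mu (Icc 0 1) f) (h00 : f 0 0 = 0) (h01 : f 0 1 = 0)
    (h10 : f 1 0 = 0) (h20 : f 2 0 = 0) (h21 : f 2 1 = 0) : EqOn (f 0) 0 (Icc 0 1) := by
  obtain ⟨a, b, hsum, hprod⟩ := exists_add_eq_and_mul_eq (-lam) (-mu)
  have h30 := h.third_eq_zero hlam hsum hprod h00 h01 h10 h20 h21
  have hψ : ∀ x ∈ Icc (0 : ℝ) 1, f 2 x - a * f 0 x = 0 := fun x hx =>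
    (h.isSecondOrderSol hsum hprod).eqOn_zero (by simp [h00, h20]) (by simp [h30, h10]) hx
  have hf : IsSecondOrderSol a (Icc 0 1) (f 0) (f 1) := fun x hx =>
    ⟨(h x hx).1 0 (by norm_num),
      ((h x hx).1 1 (by norm_num)).congr_deriv (by linear_combination hψ x hx)⟩
  exact hf.eqOn_zero h00 h10

end IsFourthOrderSol

/-- If λ ∉ 𝒩 := {j²π² + k²π² : j ≠ k positive integers}, μ ∈ ℂ, and φ : [0,1] → ℂ is a
C⁴ solution of φ'''' + λφ'' = μφ with the five boundary conditions
φ(0) = φ(1) = φ'(0) = φ''(0) = φ''(1) = 0, then φ ≡ 0. -/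
theorem stmt2 (lam : ℝ)
    (hlam : lam ∉ {x : ℝ | ∃ j k : ℕ+, j ≠ k ∧
      x = (j : ℝ) ^ 2 * π ^ 2 + (k : ℝ) ^ 2 * π ^ 2})
    (mu : ℂ) (φ : ℝ → ℂ)
    (hφ : ContDiffOn ℝ 4 φ (Icc 0 1))
    (hode : ∀ x ∈ Icc (0 : ℝ) 1,
      iteratedDerivWithin 4 φ (Icc 0 1) x
        + (lam : ℂ) * iteratedDerivWithin 2 φ (Icc 0 1) x = mu * φ x)
    (h0 : φ 0 = 0) (h1 : φ 1 = 0)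
    (h0' : derivWithin φ (Icc 0 1) 0 = 0)
    (h0'' : iteratedDerivWithin 2 φ (Icc 0 1) 0 = 0)
    (h1'' : iteratedDerivWithin 2 φ (Icc 0 1) 1 = 0) :
    ∀ x ∈ Icc (0 : ℝ) 1, φ x = 0 := by
  have hs : UniqueDiffOn ℝ (Icc (0 : ℝ) 1) := uniqueDiffOn_Icc one_pos
  have hsol : IsFourthOrderSol lam mu (Icc 0 1) (fun k => iteratedDerivWithin k φ (Icc 0 1)) :=
    fun x hx =>
    ⟨fun k hk => hφ.hasDerivWithinAt_iteratedDerivWithin hs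
        (by exact_mod_cast (by omega : k < 4)) hx,
      (hφ.hasDerivWithinAt_iteratedDerivWithin hs (by norm_num) hx).congr_deriv
        (by simp only [iteratedDerivWithin_zero]; linear_combination hode x hx)⟩
  intro x hx
  simpa using hsol.eqOn_zero hlam (by simpa using h0) (by simpa using h1)
    (by simpa using h0') h0'' h1'' hx
end

section
/- Let λ, a ∈ ℝ and set μ_j := −j⁴π⁴ + λ j²π² and D_j := λ² − 4(a + μ_j) = (2j²π² − λ)² − 4a for positive integers j. Then there exist a constant C > 0 and a positive integer J such that for every j ≥ J one has D_j > 0, −λ + √D_j > 0, λ + √D_j > 0, and the two estimates |√((−λ + √D_j)/2) − (jπ − λ/(2jπ))| ≤ C/j³ and |√((λ + √D_j)/2) − (jπ − a/(4j³π³))| ≤ C/j⁵. -/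
/-!
Write `x = jπ` and `t = 2x² − λ`, so that `D = t² − 4a` and `ε := √D − t` satisfies
`ε (√D + t) = −4a`. Hence `ε = O(1/x²)`, and more precisely
`x² ε + a = a (ε − 2λ) / (√D + t) = O(1/x²)`. Squaring the proposed approximations gives
`(−λ + √D)/2 − (x − λ/(2x))² = ε/2 − λ²/(4x²)` and
`(λ + √D)/2 − (x − a/(4x³))² = (x² ε + a)/(2x²) − a²/(16x⁶)`,
and `|√u − v| ≤ |u − v²| / v` turns these into the two estimates.
-/

open Real

theorem abs_sqrt_sub_le_div {u v : ℝ} (hu : 0 ≤ u) (hv : 0 < v) :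
    |√u - v| ≤ |u - v ^ 2| / v := by
  rw [le_div_iff₀ hv]
  calc |√u - v| * v ≤ |√u - v| * (√u + v) := by
        gcongr; exact le_add_of_nonneg_left (sqrt_nonneg u)
    _ = |u - v ^ 2| := by
      rw [← abs_of_nonneg (by positivity : 0 ≤ √u + v), ← abs_mul]
      congr 1
      linear_combination sq_sqrt hu

/-- The discriminant `D_j = (2j²π² − λ)² − 4a`, as a function of `x = jπ`. -/
def disc (lam a x : ℝ) : ℝ := (2 * x ^ 2 - lam) ^ 2 - 4 * a

section Asymptotics

variable {lam a M x : ℝ}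

theorem sq_le_two_mul_sq_sub (hlam : |lam| ≤ M) (hM : 0 ≤ M) (hxM : 9 * M ≤ x ^ 2) :
    x ^ 2 ≤ 2 * x ^ 2 - lam := by
  linarith [le_abs_self lam]

theorem sq_div_two_le_sqrt_disc (hlam : |lam| ≤ M) (ha : |a| ≤ M) (hM : 1 ≤ M)
    (hxM : 9 * M ≤ x ^ 2) : x ^ 2 / 2 ≤ √(disc lam a x) := by
  have ht := sq_le_two_mul_sq_sub hlam (by linarith) hxM
  apply le_sqrt_of_sq_le
  have : x ^ 2 * x ^ 2 ≤ (2 * x ^ 2 - lam) ^ 2 := by nlinarith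
  have : 9 * M * 9 ≤ x ^ 2 * x ^ 2 := by nlinarith
  rw [disc]
  nlinarith [le_abs_self a]

theorem disc_pos (hlam : |lam| ≤ M) (ha : |a| ≤ M) (hM : 1 ≤ M) (hxM : 9 * M ≤ x ^ 2) :
    0 < disc lam a x := by
  have := sq_div_two_le_sqrt_disc hlam ha hM hxM
  by_contra! h
  rw [sqrt_eq_zero_of_nonpos h] at this
  nlinarith

theorem neg_add_sqrt_disc_pos (hlam : |lam| ≤ M) (ha : |a| ≤ M) (hM : 1 ≤ M)
    (hxM : 9 * M ≤ x ^ 2) : 0 < -lam + √(disc lam a x) := by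
  linarith [sq_div_two_le_sqrt_disc hlam ha hM hxM, le_abs_self lam]

theorem add_sqrt_disc_pos (hlam : |lam| ≤ M) (ha : |a| ≤ M) (hM : 1 ≤ M)
    (hxM : 9 * M ≤ x ^ 2) : 0 < lam + √(disc lam a x) := by
  linarith [sq_div_two_le_sqrt_disc hlam ha hM hxM, neg_abs_le lam]

theorem abs_sqrt_disc_sub_le (hlam : |lam| ≤ M) (ha : |a| ≤ M) (hM : 1 ≤ M)
    (hxM : 9 * M ≤ x ^ 2) : |√(disc lam a x) - (2 * x ^ 2 - lam)| ≤ 4 * M / x ^ 2 := by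
  have ht := sq_le_two_mul_sq_sub hlam (by linarith) hxM
  have hx2 : 0 < x ^ 2 := by linarith
  calc _ ≤ |disc lam a x - (2 * x ^ 2 - lam) ^ 2| / (2 * x ^ 2 - lam) :=
        abs_sqrt_sub_le_div (disc_pos hlam ha hM hxM).le (by linarith)
    _ = 4 * |a| / (2 * x ^ 2 - lam) := by
        rw [disc, sub_sub_cancel_left, abs_neg, abs_mul, abs_of_pos four_pos]
    _ ≤ 4 * M / x ^ 2 := by gcongr

theorem abs_sq_mul_sqrt_disc_sub_add_le (hlam : |lam| ≤ M) (ha : |a| ≤ M) (hM : 1 ≤ M)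
    (hxM : 9 * M ≤ x ^ 2) :
    |x ^ 2 * (√(disc lam a x) - (2 * x ^ 2 - lam)) + a| ≤ 3 * M ^ 2 / x ^ 2 := by
  set w := √(disc lam a x)
  set t := 2 * x ^ 2 - lam
  have ht : x ^ 2 ≤ t := sq_le_two_mul_sq_sub hlam (by linarith) hxM
  have hwt : x ^ 2 ≤ w + t := le_add_of_nonneg_of_le (sqrt_nonneg _) ht
  have hx2 : 0 < x ^ 2 := by linarith
  have hprod : (w - t) * (w + t) = -4 * a := by
    have hD : disc lam a x = t ^ 2 - 4 * a := rfl
    linear_combination sq_sqrt (disc_pos hlam ha hM hxM).le + hD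
  have hkey : x ^ 2 * (w - t) + a = a * (w - t - 2 * lam) / (w + t) := by
    rw [eq_div_iff (by linarith)]
    linear_combination x ^ 2 * hprod
  have hsmall : |w - t - 2 * lam| ≤ 3 * M := by
    have : 4 * M / x ^ 2 ≤ M := by rw [div_le_iff₀ hx2]; nlinarith
    calc |w - t - 2 * lam| ≤ |w - t| + |2 * lam| := abs_sub _ _
      _ ≤ 4 * M / x ^ 2 + 2 * M := by
          rw [abs_mul, abs_two]
          gcongr
          exact abs_sqrt_disc_sub_le hlam ha hM hxM
      _ ≤ 3 * M := by linarith
  rw [hkey, abs_div, abs_mul, abs_of_pos (by linarith : 0 < w + t)]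
  calc |a| * |w - t - 2 * lam| / (w + t) ≤ M * (3 * M) / x ^ 2 := by gcongr
    _ = 3 * M ^ 2 / x ^ 2 := by ring

theorem abs_sqrt_neg_add_sqrt_disc_sub_le (hlam : |lam| ≤ M) (ha : |a| ≤ M) (hM : 1 ≤ M)
    (hx : 0 < x) (hxM : 9 * M ≤ x ^ 2) :
    |√((-lam + √(disc lam a x)) / 2) - (x - lam / (2 * x))| ≤ 6 * M ^ 2 / x ^ 3 := by
  have hx2 : 0 < x ^ 2 := by positivity
  have hv : x / 2 ≤ x - lam / (2 * x) := by
    have : lam / (2 * x) ≤ x / 2 := by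
      rw [div_le_div_iff₀ (by positivity) two_pos]; nlinarith [le_abs_self lam]
    linarith
  have hdiff :
      |(-lam + √(disc lam a x)) / 2 - (x - lam / (2 * x)) ^ 2| ≤ 3 * M ^ 2 / x ^ 2 := by
    have hid : (-lam + √(disc lam a x)) / 2 - (x - lam / (2 * x)) ^ 2
        = (√(disc lam a x) - (2 * x ^ 2 - lam)) / 2 - lam ^ 2 / (4 * x ^ 2) := by
      field_simp; ring
    have hlam2 : lam ^ 2 ≤ M ^ 2 := sq_le_sq' (abs_le.mp hlam).1 (abs_le.mp hlam).2
    rw [hid]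
    calc _ ≤ |√(disc lam a x) - (2 * x ^ 2 - lam)| / 2 + lam ^ 2 / (4 * x ^ 2) := by
          refine (abs_sub _ _).trans ?_
          rw [abs_div, abs_two, abs_of_nonneg (by positivity : 0 ≤ lam ^ 2 / (4 * x ^ 2))]
      _ ≤ 4 * M / x ^ 2 / 2 + M ^ 2 / (4 * x ^ 2) := by
          gcongr; exact abs_sqrt_disc_sub_le hlam ha hM hxM
      _ ≤ 3 * M ^ 2 / x ^ 2 := by
          rw [div_div, ← sub_nonneg]
          field_simp
          nlinarith
  calc _ ≤ |(-lam + √(disc lam a x)) / 2 - (x - lam / (2 * x)) ^ 2| / (x - lam / (2 * x)) :=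
        abs_sqrt_sub_le_div (by linarith [neg_add_sqrt_disc_pos hlam ha hM hxM]) (by linarith)
    _ ≤ 3 * M ^ 2 / x ^ 2 / (x / 2) := by gcongr
    _ = 6 * M ^ 2 / x ^ 3 := by field_simp; ring

theorem abs_sqrt_add_sqrt_disc_sub_le (hlam : |lam| ≤ M) (ha : |a| ≤ M) (hM : 1 ≤ M)
    (hx : 0 < x) (hxM : 9 * M ≤ x ^ 2) :
    |√((lam + √(disc lam a x)) / 2) - (x - a / (4 * x ^ 3))| ≤ 4 * M ^ 2 / x ^ 5 := by
  have hx2 : 9 ≤ x ^ 2 := by linarith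
  have hv : x / 2 ≤ x - a / (4 * x ^ 3) := by
    have : a / (4 * x ^ 3) ≤ x / 2 := by
      rw [div_le_div_iff₀ (by positivity) two_pos]; nlinarith [le_abs_self a]
    linarith
  have hdiff :
      |(lam + √(disc lam a x)) / 2 - (x - a / (4 * x ^ 3)) ^ 2| ≤ 2 * M ^ 2 / x ^ 4 := by
    have hid : (lam + √(disc lam a x)) / 2 - (x - a / (4 * x ^ 3)) ^ 2
        = (x ^ 2 * (√(disc lam a x) - (2 * x ^ 2 - lam)) + a) / (2 * x ^ 2)
          - a ^ 2 / (16 * x ^ 6) := by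
      field_simp; ring
    have ha2 : a ^ 2 ≤ M ^ 2 := sq_le_sq' (abs_le.mp ha).1 (abs_le.mp ha).2
    rw [hid]
    calc _ ≤ |x ^ 2 * (√(disc lam a x) - (2 * x ^ 2 - lam)) + a| / (2 * x ^ 2)
            + a ^ 2 / (16 * x ^ 6) := by
          refine (abs_sub _ _).trans ?_
          rw [abs_div, abs_of_pos (by positivity : 0 < 2 * x ^ 2),
            abs_of_nonneg (by positivity : 0 ≤ a ^ 2 / (16 * x ^ 6))]
      _ ≤ 3 * M ^ 2 / x ^ 2 / (2 * x ^ 2) + M ^ 2 / (16 * x ^ 6) := by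
          gcongr; exact abs_sq_mul_sqrt_disc_sub_add_le hlam ha hM hxM
      _ ≤ 2 * M ^ 2 / x ^ 4 := by
          rw [div_div, ← sub_nonneg]
          field_simp
          nlinarith
  calc _ ≤ |(lam + √(disc lam a x)) / 2 - (x - a / (4 * x ^ 3)) ^ 2| / (x - a / (4 * x ^ 3)) :=
        abs_sqrt_sub_le_div (by linarith [add_sqrt_disc_pos hlam ha hM hxM]) (by linarith)
    _ ≤ 2 * M ^ 2 / x ^ 4 / (x / 2) := by gcongr
    _ = 4 * M ^ 2 / x ^ 5 := by field_simp; ring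

end Asymptotics

/-- Asymptotics of the roots of the characteristic equation r⁴ + λr² + a + μ_j = 0,
where μ_j := −j⁴π⁴ + λj²π² and D_j := λ² − 4(a + μ_j). -/
theorem stmt3 (lam a : ℝ) :
    ∃ C > (0 : ℝ), ∃ J : ℕ+, ∀ j : ℕ+, J ≤ j →
      (let mu : ℝ := -(j : ℝ) ^ 4 * π ^ 4 + lam * (j : ℝ) ^ 2 * π ^ 2
       let D : ℝ := lam ^ 2 - 4 * (a + mu)
       D > 0 ∧ -lam + Real.sqrt D > 0 ∧ lam + Real.sqrt D > 0 ∧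
        |Real.sqrt ((-lam + Real.sqrt D) / 2)
            - ((j : ℝ) * π - lam / (2 * (j : ℝ) * π))| ≤ C / (j : ℝ) ^ 3 ∧
        |Real.sqrt ((lam + Real.sqrt D) / 2)
            - ((j : ℝ) * π - a / (4 * (j : ℝ) ^ 3 * π ^ 3))| ≤ C / (j : ℝ) ^ 5) := by
  set M := max (max |lam| |a|) 1
  have hM : 1 ≤ M := le_max_right _ _
  have hlam : |lam| ≤ M := (le_max_left _ _).trans (le_max_left _ _)
  have ha : |a| ≤ M := (le_max_right _ _).trans (le_max_left _ _)
  refine ⟨6 * M ^ 2, by positivity, ⟨⌈M⌉₊ + 1, Nat.succ_pos _⟩, fun j hj => ?_⟩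
  have hMj : M ≤ j := (Nat.le_ceil M).trans (by exact_mod_cast Nat.le_of_succ_le hj)
  have hj3 : 3 * (j : ℝ) ≤ j * π := by nlinarith [pi_gt_three, j.pos]
  have hx : 0 < (j : ℝ) * π := by positivity
  have hxM : 9 * M ≤ ((j : ℝ) * π) ^ 2 := by nlinarith
  have hD : lam ^ 2 - 4 * (a + (-(j : ℝ) ^ 4 * π ^ 4 + lam * (j : ℝ) ^ 2 * π ^ 2))
      = disc lam a (j * π) := by unfold disc; ring
  have hden₁ : 2 * (j : ℝ) * π = 2 * (j * π) := by ring
  have hden₃ : 4 * (j : ℝ) ^ 3 * π ^ 3 = 4 * (j * π) ^ 3 := by ring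
  dsimp only
  rw [hD, hden₁, hden₃]
  refine ⟨disc_pos hlam ha hM hxM, neg_add_sqrt_disc_pos hlam ha hM hxM,
    add_sqrt_disc_pos hlam ha hM hxM, ?_, ?_⟩
  · calc _ ≤ 6 * M ^ 2 / ((j : ℝ) * π) ^ 3 :=
          abs_sqrt_neg_add_sqrt_disc_sub_le hlam ha hM hx hxM
      _ ≤ 6 * M ^ 2 / (j : ℝ) ^ 3 := by gcongr; linarith
  · calc _ ≤ 4 * M ^ 2 / ((j : ℝ) * π) ^ 5 :=
          abs_sqrt_add_sqrt_disc_sub_le hlam ha hM hx hxM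
      _ ≤ 6 * M ^ 2 / (j : ℝ) ^ 5 := by gcongr <;> linarith
end

section
/- Let λ, a ∈ ℝ with a ≠ 0, and set μ_j := −j⁴π⁴ + λ j²π² and D_j := λ² − 4(a + μ_j) for positive integers j, and s_j := √((λ + √D_j)/2) whenever D_j > 0 and λ + √D_j > 0. Then there exist a constant C > 0 and a positive integer J such that for all j ≥ J, s_j is well defined, sin(s_j) ≠ 0, and |cos(s_j)/sin(s_j)| ≤ C j³. -/
/-!
Write `m = jπ`. The number `x = s_j²` is a root of `x² - λx + a + μ_j`, and with
`μ_j = -m⁴ + λm²` this polynomial factors as `(x - m²)(x + m² - λ) + a`. Hence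
`(s_j - m)(s_j + m)(s_j² + m² - λ) = -a`: the first factor is small, but since `a ≠ 0`
it is at least of order `|a| / j³`. Jordan's inequality `|sin y| ≥ 2|y|/π` applied to
`y = s_j - jπ` then gives `|sin s_j| ≳ |a| / j³`.
-/

open Real

lemma discr_pos_and_add_sqrt_discr_pos {lam c : ℝ} (hc : c < 0) :
    0 < lam ^ 2 - 4 * c ∧ 0 < lam + √(lam ^ 2 - 4 * c) := by
  have hlt : lam ^ 2 < lam ^ 2 - 4 * c := by linarith
  refine ⟨(sq_nonneg lam).trans_lt hlt, ?_⟩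
  have : |lam| < √(lam ^ 2 - 4 * c) := by
    rw [← sqrt_sq_eq_abs]
    exact sqrt_lt_sqrt (sq_nonneg lam) hlt
  linarith [neg_abs_le lam]

lemma sq_sub_sq_mul_eq_neg {lam a m s : ℝ}
    (hD : 0 ≤ lam ^ 2 - 4 * (a + (-m ^ 4 + lam * m ^ 2)))
    (hs : s ^ 2 = (lam + √(lam ^ 2 - 4 * (a + (-m ^ 4 + lam * m ^ 2)))) / 2) :
    (s ^ 2 - m ^ 2) * (s ^ 2 + m ^ 2 - lam) = -a := by
  linear_combination (s ^ 2 - (lam - √(lam ^ 2 - 4 * (a + (-m ^ 4 + lam * m ^ 2)))) / 2) * hs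
    + sq_sqrt hD / 4

lemma add_neg_pow_four_add_mul_sq_neg {lam a m : ℝ} (hm : |lam| + |a| + 1 ≤ m ^ 2) :
    a + (-m ^ 4 + lam * m ^ 2) < 0 := by
  have : 1 * (|a| + 1) ≤ m ^ 2 * (m ^ 2 - lam) :=
    mul_le_mul (by linarith [abs_nonneg lam, abs_nonneg a]) (by linarith [le_abs_self lam])
      (by positivity) (by positivity)
  linarith [le_abs_self a]

section RootNearSquare

variable {lam a m s : ℝ} (hm : |lam| + |a| + 1 ≤ m ^ 2) (hm1 : 1 ≤ m) (hs0 : 0 ≤ s)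
  (hfac : (s ^ 2 - m ^ 2) * (s ^ 2 + m ^ 2 - lam) = -a)
include hm hfac

lemma abs_sq_sub_sq_le_one : |s ^ 2 - m ^ 2| ≤ 1 := by
  have hP : |a| + 1 ≤ s ^ 2 + m ^ 2 - lam := by
    linarith [le_abs_self lam, sq_nonneg s]
  have habs : |s ^ 2 - m ^ 2| * (s ^ 2 + m ^ 2 - lam) = |a| := by
    rw [← abs_neg a, ← hfac, abs_mul,
      abs_of_pos (by linarith [abs_nonneg a] : 0 < s ^ 2 + m ^ 2 - lam)]
  nlinarith [abs_nonneg (s ^ 2 - m ^ 2), abs_nonneg a]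

include hm1 hs0

lemma abs_sub_le_one : |s - m| ≤ 1 :=
  calc |s - m| ≤ |s - m| * |s + m| :=
        le_mul_of_one_le_right (abs_nonneg _) (by rw [abs_of_nonneg (by linarith)]; linarith)
    _ = |s ^ 2 - m ^ 2| := by rw [← abs_mul]; ring_nf
    _ ≤ 1 := abs_sq_sub_sq_le_one hm hfac

lemma abs_le_mul_abs_sub : |a| ≤ 12 * m ^ 3 * |s - m| := by
  have hsm : s ≤ 2 * m := by linarith [(abs_le.mp (abs_sub_le_one hm hm1 hs0 hfac)).2]
  have hs2 : s ^ 2 ≤ m ^ 2 + 1 := by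
    linarith [(abs_le.mp (abs_sq_sub_sq_le_one hm hfac)).2]
  have hP : 0 < s ^ 2 + m ^ 2 - lam := by
    linarith [le_abs_self lam, sq_nonneg s, abs_nonneg a]
  have hP' : s ^ 2 + m ^ 2 - lam ≤ 4 * m ^ 2 := by
    linarith [neg_abs_le lam, abs_nonneg a]
  have habs : |a| = |s - m| * ((s + m) * (s ^ 2 + m ^ 2 - lam)) := by
    rw [← abs_neg a, ← hfac, show s ^ 2 - m ^ 2 = (s - m) * (s + m) by ring, abs_mul, abs_mul,
      abs_of_pos (by linarith : 0 < s + m), abs_of_pos hP, mul_assoc]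
  calc |a| = |s - m| * ((s + m) * (s ^ 2 + m ^ 2 - lam)) := habs
    _ ≤ |s - m| * (3 * m * (4 * m ^ 2)) := by gcongr; linarith
    _ = 12 * m ^ 3 * |s - m| := by ring

end RootNearSquare

lemma sin_ne_zero_and_abs_cos_div_sin_le {x δ : ℝ} (j : ℕ) (hδ : 0 < δ)
    (hlo : δ ≤ |x - j * π|) (hhi : |x - j * π| ≤ π / 2) :
    sin x ≠ 0 ∧ |cos x / sin x| ≤ π / (2 * δ) := by
  have hsin : 2 / π * δ ≤ |sin x| :=
    calc 2 / π * δ ≤ 2 / π * |x - j * π| := by gcongr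
      _ ≤ |sin (x - j * π)| := mul_abs_le_abs_sin hhi
      _ = |sin x| := by
        rw [sin_sub_nat_mul_pi, abs_mul, abs_pow, abs_neg, abs_one, one_pow, one_mul]
  have hpos : 0 < |sin x| := lt_of_lt_of_le (by positivity) hsin
  refine ⟨abs_pos.mp hpos, ?_⟩
  rw [abs_div, div_le_div_iff₀ hpos (by positivity)]
  calc |cos x| * (2 * δ) ≤ 1 * (2 * δ) := by gcongr; exact abs_cos_le_one x
    _ = π * (2 / π * δ) := by field_simp
    _ ≤ π * |sin x| := by gcongr

/-- With μ_j := −j⁴π⁴ + λj²π², D_j := λ² − 4(a + μ_j) and s_j := √((λ + √D_j)/2)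
(well defined for large j), one has sin(s_j) ≠ 0 and |cot(s_j)| = O(j³), provided a ≠ 0. -/
theorem stmt4 (lam a : ℝ) (ha : a ≠ 0) :
    ∃ C > (0 : ℝ), ∃ J : ℕ+, ∀ j : ℕ+, J ≤ j →
      (let mu : ℝ := -(j : ℝ) ^ 4 * π ^ 4 + lam * (j : ℝ) ^ 2 * π ^ 2
       let D : ℝ := lam ^ 2 - 4 * (a + mu)
       let s : ℝ := Real.sqrt ((lam + Real.sqrt D) / 2)
       D > 0 ∧ lam + Real.sqrt D > 0 ∧ Real.sin s ≠ 0 ∧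
        |Real.cos s / Real.sin s| ≤ C * (j : ℝ) ^ 3) := by
  have ha' : 0 < |a| := abs_pos.mpr ha
  refine ⟨6 * π ^ 4 / |a|, by positivity, ⟨⌈|lam| + |a|⌉₊ + 1, Nat.succ_pos _⟩,
    fun j hJ => ?_⟩
  have hj : |lam| + |a| + 1 ≤ (j : ℝ) := by
    have : ((⌈|lam| + |a|⌉₊ + 1 : ℕ) : ℝ) ≤ (j : ℕ) := by exact_mod_cast hJ
    push_cast at this
    linarith [Nat.le_ceil (|lam| + |a|)]
  set m : ℝ := (j : ℝ) * π with hm_def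
  have hjm : (j : ℝ) ≤ m := le_mul_of_one_le_right (by positivity) (by linarith [pi_gt_three])
  have hm1 : 1 ≤ m := by linarith [abs_nonneg lam, abs_nonneg a]
  have hm : |lam| + |a| + 1 ≤ m ^ 2 := by nlinarith
  have hmu : -(j : ℝ) ^ 4 * π ^ 4 + lam * (j : ℝ) ^ 2 * π ^ 2 = -m ^ 4 + lam * m ^ 2 := by
    ring
  dsimp only
  rw [hmu]
  obtain ⟨hD, hpos⟩ :=
    discr_pos_and_add_sqrt_discr_pos (lam := lam) (add_neg_pow_four_add_mul_sq_neg hm)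
  set s := √((lam + √(lam ^ 2 - 4 * (a + (-m ^ 4 + lam * m ^ 2)))) / 2)
  have hfac := sq_sub_sq_mul_eq_neg hD.le (sq_sqrt (by linarith) : s ^ 2 = _)
  have hs0 : 0 ≤ s := sqrt_nonneg _
  obtain ⟨hsin, hcot⟩ := sin_ne_zero_and_abs_cos_div_sin_le (x := s) j
    (by positivity : 0 < |a| / (12 * m ^ 3))
    (by rw [div_le_iff₀ (by positivity)]; linarith [abs_le_mul_abs_sub hm hm1 hs0 hfac])
    ((abs_sub_le_one hm hm1 hs0 hfac).trans (by linarith [pi_gt_three]))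
  refine ⟨hD, hpos, hsin, hcot.trans_eq ?_⟩
  rw [hm_def]
  field_simp
  ring
end

section
/- Let λ ∈ ℝ with λ ∉ 𝒩 and set μ_j := −j⁴π⁴ + λ j²π². Let (c_j)_{j≥1} be a square-summable sequence of complex numbers such that for every t > 0 the series ∑_{j≥1} c_j · j · e^{μ_j t} converges absolutely and equals 0. Then c_j = 0 for every positive integer j. -/
/-!
Since `μ_j → -∞`, among the indices with `c_j ≠ 0` there is one, `j₀`, of largest exponent, and
`λ ∉ 𝒩` makes it the only one with that exponent. Multiplying the vanishing series by
`e^{-μ_{j₀} t}` and letting `t → ∞`, dominated convergence (Tannery's theorem) kills every term but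
`c_{j₀} j₀`, which therefore vanishes.
-/

open Real Filter Topology Function

section ExponentialSums

variable {ι : Type*} {a : ι → ℂ} {μ : ι → ℝ}

lemma tendsto_tsum_mul_exp_sub_of_forall_le (hμ : Injective μ) {i₀ : ι} {t₀ : ℝ}
    (hmax : ∀ i ∈ support a, μ i ≤ μ i₀)
    (hsum : Summable fun i => ‖a i * (exp (μ i * t₀) : ℂ)‖) :
    Tendsto (fun t => ∑' i, a i * (exp ((μ i - μ i₀) * t) : ℂ)) atTop (𝓝 (a i₀)) := by
  classical
  have hnorm (i : ι) (t : ℝ) : ‖a i * (exp ((μ i - μ i₀) * t) : ℂ)‖ =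
      ‖a i * (exp (μ i * t) : ℂ)‖ * exp (-μ i₀ * t) := by
    simp only [norm_mul, Complex.norm_real, norm_of_nonneg (exp_nonneg _), mul_assoc, ← exp_add]
    ring_nf
  have hlim (i : ι) : Tendsto (fun t => a i * (exp ((μ i - μ i₀) * t) : ℂ)) atTop
      (𝓝 ((Pi.single i₀ (a i₀) : ι → ℂ) i)) := by
    rcases eq_or_ne i i₀ with rfl | hi
    · simp
    by_cases hai : a i = 0
    · simp [hai, hi]
    have hlt : μ i - μ i₀ < 0 := sub_neg.2 <| (hmax i hai).lt_of_ne (hμ.ne hi)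
    have hexp : Tendsto (fun t => exp ((μ i - μ i₀) * t)) atTop (𝓝 0) :=
      tendsto_exp_atBot.comp <| tendsto_id.const_mul_atTop_of_neg hlt
    simpa [hi] using ((Complex.continuous_ofReal.tendsto 0).comp hexp).const_mul (a i)
  have hbound : ∀ᶠ t in atTop, ∀ i,
      ‖a i * (exp ((μ i - μ i₀) * t) : ℂ)‖ ≤ ‖a i * (exp ((μ i - μ i₀) * t₀) : ℂ)‖ := by
    filter_upwards [eventually_ge_atTop t₀] with t ht i
    by_cases hai : a i = 0
    · simp [hai]
    have hle : μ i - μ i₀ ≤ 0 := sub_nonpos.2 (hmax i hai)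
    simp only [norm_mul, Complex.norm_real, norm_of_nonneg (exp_nonneg _)]
    exact mul_le_mul_of_nonneg_left (exp_le_exp.2 (mul_le_mul_of_nonpos_left ht hle))
      (norm_nonneg _)
  simpa using tendsto_tsum_of_dominated_convergence
    ((hsum.mul_right (exp (-μ i₀ * t₀))).congr fun i => (hnorm i t₀).symm) hlim hbound

theorem eq_zero_of_tsum_mul_exp_eventually_eq_zero (hμ : Injective μ)
    (hμ_bot : Tendsto μ cofinite atBot) {t₀ : ℝ}
    (hsum : Summable fun i => ‖a i * (exp (μ i * t₀) : ℂ)‖)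
    (hzero : ∀ᶠ t in atTop, ∑' i, a i * (exp (μ i * t) : ℂ) = 0) : a = 0 := by
  by_contra ha
  obtain ⟨i₀, hi₀, hmax⟩ := hμ_bot.exists_within_forall_ge (support_nonempty_iff.2 ha)
  have hshift (t : ℝ) : ∑' i, a i * (exp ((μ i - μ i₀) * t) : ℂ) =
      (∑' i, a i * (exp (μ i * t) : ℂ)) * (exp (-μ i₀ * t) : ℂ) := by
    rw [← tsum_mul_right]
    congr 1 with i
    rw [mul_assoc, ← Complex.ofReal_mul, ← exp_add]
    ring_nf
  have hlim_zero : Tendsto (fun t => ∑' i, a i * (exp ((μ i - μ i₀) * t) : ℂ)) atTop (𝓝 0) :=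
    tendsto_const_nhds.congr' <| hzero.mono fun t ht =>
      ((hshift t).trans (by rw [ht, zero_mul])).symm
  exact hi₀ <| tendsto_nhds_unique (tendsto_tsum_mul_exp_sub_of_forall_le hμ hmax hsum) hlim_zero

end ExponentialSums

noncomputable def ksEigenvalue (lam : ℝ) (j : ℕ+) : ℝ :=
  -(j : ℝ) ^ 4 * π ^ 4 + lam * (j : ℝ) ^ 2 * π ^ 2

lemma ksEigenvalue_injective {lam : ℝ}
    (hlam : lam ∉ {x : ℝ | ∃ j k : ℕ+, j ≠ k ∧ x = (j : ℝ) ^ 2 * π ^ 2 + (k : ℝ) ^ 2 * π ^ 2}) :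
    Injective (ksEigenvalue lam) := by
  intro j k hjk
  by_contra hne
  have hsq : (j : ℝ) ^ 2 * π ^ 2 - (k : ℝ) ^ 2 * π ^ 2 ≠ 0 := by
    have hjk' : (j : ℝ) ≠ k := by exact_mod_cast PNat.coe_injective.ne hne
    have : (j : ℝ) ^ 2 ≠ (k : ℝ) ^ 2 := fun h => hjk' <| by
      simpa using (pow_left_inj₀ (by positivity) (by positivity) two_ne_zero).1 h
    exact sub_ne_zero.2 fun h => this (mul_right_cancel₀ (by positivity) h)
  -- With `s = j²π²` one has `μ_j = s (λ - s)`, so `μ_j - μ_k = (s_j - s_k)(λ - s_j - s_k)`.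
  have hfactor : ((j : ℝ) ^ 2 * π ^ 2 - (k : ℝ) ^ 2 * π ^ 2) *
      (lam - ((j : ℝ) ^ 2 * π ^ 2 + (k : ℝ) ^ 2 * π ^ 2)) = 0 := by
    unfold ksEigenvalue at hjk
    linear_combination hjk
  exact hlam ⟨j, k, hne, sub_eq_zero.1 ((mul_eq_zero.1 hfactor).resolve_left hsq)⟩

lemma tendsto_ksEigenvalue_cofinite_atBot (lam : ℝ) :
    Tendsto (ksEigenvalue lam) cofinite atBot := by
  have hj : Tendsto (fun j : ℕ+ => (j : ℝ)) cofinite atTop :=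
    tendsto_natCast_atTop_atTop.comp (Nat.cofinite_eq_atTop ▸ PNat.coe_injective.tendsto_cofinite)
  have hs : Tendsto (fun j : ℕ+ => (j : ℝ) ^ 2 * π ^ 2) cofinite atTop :=
    ((tendsto_pow_atTop two_ne_zero).comp hj).atTop_mul_const (by positivity)
  have hprod := hs.atTop_mul_atTop₀ (tendsto_atTop_add_const_right _ (-lam) hs)
  refine (tendsto_neg_atTop_atBot.comp hprod).congr fun j => ?_
  simp only [comp_apply, ksEigenvalue]
  ring

theorem stmt5_general (lam : ℝ)
    (hlam : lam ∉ {x : ℝ | ∃ j k : ℕ+, j ≠ k ∧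
      x = (j : ℝ) ^ 2 * π ^ 2 + (k : ℝ) ^ 2 * π ^ 2})
    (c : ℕ+ → ℂ)
    (hsum : ∀ t : ℝ, 0 < t →
      Summable (fun j : ℕ+ => ‖c j * (j : ℂ) *
        (Real.exp ((-(j : ℝ) ^ 4 * π ^ 4 + lam * (j : ℝ) ^ 2 * π ^ 2) * t) : ℂ)‖))
    (hzero : ∀ t : ℝ, 0 < t →
      (∑' j : ℕ+, c j * (j : ℂ) *
        (Real.exp ((-(j : ℝ) ^ 4 * π ^ 4 + lam * (j : ℝ) ^ 2 * π ^ 2) * t) : ℂ)) = 0) :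
    ∀ j : ℕ+, c j = 0 := by
  have hcj : (fun j : ℕ+ => c j * (j : ℂ)) = 0 :=
    eq_zero_of_tsum_mul_exp_eventually_eq_zero (μ := ksEigenvalue lam)
      (ksEigenvalue_injective hlam) (tendsto_ksEigenvalue_cofinite_atBot lam) (hsum 1 one_pos)
      ((eventually_gt_atTop 0).mono hzero)
  intro j
  simpa using congr_fun hcj j

/-- If λ ∉ 𝒩, μ_j := −j⁴π⁴ + λj²π², and (c_j) ∈ ℓ² is such that for every t > 0 the
series ∑_j c_j · j · e^{μ_j t} converges absolutely to 0, then all c_j vanish. -/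
theorem stmt5 (lam : ℝ)
    (hlam : lam ∉ {x : ℝ | ∃ j k : ℕ+, j ≠ k ∧
      x = (j : ℝ) ^ 2 * π ^ 2 + (k : ℝ) ^ 2 * π ^ 2})
    (c : ℕ+ → ℂ)
    (hc : Summable (fun j : ℕ+ => ‖c j‖ ^ 2))
    (hsum : ∀ t : ℝ, 0 < t →
      Summable (fun j : ℕ+ => ‖c j * (j : ℂ) *
        (Real.exp ((-(j : ℝ) ^ 4 * π ^ 4 + lam * (j : ℝ) ^ 2 * π ^ 2) * t) : ℂ)‖))
    (hzero : ∀ t : ℝ, 0 < t →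
      (∑' j : ℕ+, c j * (j : ℂ) *
        (Real.exp ((-(j : ℝ) ^ 4 * π ^ 4 + lam * (j : ℝ) ^ 2 * π ^ 2) * t) : ℂ)) = 0) :
    ∀ j : ℕ+, c j = 0 :=
  stmt5_general lam hlam c hsum hzero
end

section
/- Let λ ∈ ℝ with λ ∉ 𝒩, set μ_j := −j⁴π⁴ + λ j²π², and assume μ_j ≠ 0 for every positive integer j. Let (e_j)_{j≥1} be an absolutely summable sequence of complex numbers such that ∑_{j≥1} e_j · μ_j^{−p} = 0 for every integer p ≥ 0. Then e_j = 0 for every positive integer j. -/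
/-!
Put ν_j := μ_j⁻¹. Since μ_j → -∞ the ν_j are bounded, and since λ ∉ 𝒩 they are pairwise
distinct. The hypothesis says that ∑_j e_j P(ν_j) = 0 for every real polynomial P. Fix k; the
polynomial Q(x) = 1 - c (x - ν_k)², with c > 0 small enough, takes the value 1 at ν_k and values
in (-1, 1) at every other ν_j. By dominated convergence ∑_j e_j Q(ν_j)ⁿ → e_k, while every
term of this sequence is 0.
-/

open Real Filter Topology Polynomial

section Moments

variable {ι : Type*} {e : ι → ℂ} {ν : ι → ℝ} {M : ℝ}

lemma summable_mul_ofReal_pow (he : Summable (‖e ·‖)) (hν : ∀ j, |ν j| ≤ M) (p : ℕ) :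
    Summable fun j => e j * (ν j : ℂ) ^ p :=
  Summable.of_norm_bounded (he.mul_right (M ^ p)) fun j => by
    rw [norm_mul, norm_pow, Complex.norm_real, Real.norm_eq_abs]
    gcongr
    exact hν j

lemma tsum_mul_ofReal_eval_eq_zero (he : Summable (‖e ·‖)) (hν : ∀ j, |ν j| ≤ M)
    (hmom : ∀ p : ℕ, ∑' j, e j * (ν j : ℂ) ^ p = 0) (P : ℝ[X]) :
    ∑' j, e j * ((P.eval (ν j) : ℝ) : ℂ) = 0 := by
  simp_rw [eval_eq_sum_range, Complex.ofReal_sum, Complex.ofReal_mul, Complex.ofReal_pow,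
    Finset.mul_sum, mul_left_comm (e _)]
  rw [Summable.tsum_finsetSum fun i _ => (summable_mul_ofReal_pow he hν i).mul_left _]
  simp [tsum_mul_left, hmom]

lemma tendsto_tsum_mul_ofReal_pow_of_peak {f : ι → ℝ} {k : ι} (he : Summable (‖e ·‖))
    (hk : f k = 1) (hlt : ∀ j, j ≠ k → |f j| < 1) :
    Tendsto (fun n : ℕ => ∑' j, e j * (f j : ℂ) ^ n) atTop (𝓝 (e k)) := by
  classical
  have hle (j : ι) : |f j| ≤ 1 := by
    rcases eq_or_ne j k with rfl | hj
    · simp [hk]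
    · exact (hlt j hj).le
  have hlim (j : ι) :
      Tendsto (fun n : ℕ => e j * (f j : ℂ) ^ n) atTop (𝓝 ((Pi.single k (e k) : ι → ℂ) j)) := by
    rcases eq_or_ne j k with rfl | hj
    · simp [hk]
    · simp only [Pi.single_eq_of_ne hj, ← Complex.ofReal_pow]
      simpa using ((Complex.continuous_ofReal.tendsto 0).comp
        (tendsto_pow_atTop_nhds_zero_of_abs_lt_one (hlt j hj))).const_mul (e j)
  rw [← tsum_pi_single k (e k)]
  refine tendsto_tsum_of_dominated_convergence he hlim (Eventually.of_forall fun n j => ?_)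
  rw [norm_mul, norm_pow, Complex.norm_real, Real.norm_eq_abs]
  exact mul_le_of_le_one_right (norm_nonneg _) (pow_le_one₀ (abs_nonneg _) (hle j))

lemma exists_polynomial_eval_eq_one_abs_lt_one {a : ℝ} (ha : |a| ≤ M) :
    ∃ Q : ℝ[X], Q.eval a = 1 ∧ ∀ x, |x| ≤ M → x ≠ a → |Q.eval x| < 1 := by
  refine ⟨1 - C (4 * M ^ 2 + 1)⁻¹ * (X - C a) ^ 2, by simp, fun x hx hxa => ?_⟩
  have hpos : 0 < (4 * M ^ 2 + 1)⁻¹ * (x - a) ^ 2 := by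
    have := sub_ne_zero.2 hxa
    positivity
  have hlt : (4 * M ^ 2 + 1)⁻¹ * (x - a) ^ 2 < 1 := by
    rw [inv_mul_lt_one₀ (by positivity)]
    nlinarith [abs_le.1 ha, abs_le.1 hx]
  simp only [eval_sub, eval_one, eval_mul, eval_C, eval_pow, eval_X]
  rw [abs_lt]
  constructor <;> linarith

theorem eq_zero_of_tsum_mul_ofReal_pow_eq_zero (he : Summable (‖e ·‖)) (hν : ∀ j, |ν j| ≤ M)
    (hinj : Function.Injective ν) (hmom : ∀ p : ℕ, ∑' j, e j * (ν j : ℂ) ^ p = 0) (k : ι) :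
    e k = 0 := by
  obtain ⟨Q, hQk, hQlt⟩ := exists_polynomial_eval_eq_one_abs_lt_one (hν k)
  have hpow (n : ℕ) : ∑' j, e j * ((Q.eval (ν j) : ℝ) : ℂ) ^ n = 0 := by
    simpa [eval_pow] using tsum_mul_ofReal_eval_eq_zero he hν hmom (Q ^ n)
  have hlim := tendsto_tsum_mul_ofReal_pow_of_peak he hQk fun j hj => hQlt _ (hν j) (hinj.ne hj)
  simp only [hpow] at hlim
  exact tendsto_nhds_unique tendsto_const_nhds hlim |>.symm

end Moments

noncomputable def mu (lam x : ℝ) : ℝ := -x ^ 4 * π ^ 4 + lam * x ^ 2 * π ^ 2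

lemma mu_pnat_injective {lam : ℝ} (hlam : lam ∉ {x : ℝ | ∃ j k : ℕ+, j ≠ k ∧
      x = (j : ℝ) ^ 2 * π ^ 2 + (k : ℝ) ^ 2 * π ^ 2}) :
    Function.Injective fun j : ℕ+ => mu lam j := by
  intro a b hab
  by_contra hne
  have hsq : (a : ℝ) ^ 2 - (b : ℝ) ^ 2 ≠ 0 := by
    rw [sub_ne_zero, Ne, sq_eq_sq₀ (by positivity) (by positivity)]
    exact_mod_cast hne
  have hfactor : ((a : ℝ) ^ 2 - (b : ℝ) ^ 2) * π ^ 2 *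
      (lam - ((a : ℝ) ^ 2 * π ^ 2 + (b : ℝ) ^ 2 * π ^ 2)) = 0 := by
    simp only [mu] at hab
    linear_combination hab
  exact hlam ⟨a, b, hne, by
    have := (mul_eq_zero.1 hfactor).resolve_left (mul_ne_zero hsq (by positivity))
    linarith⟩

lemma tendsto_mu_atTop_atBot (lam : ℝ) : Tendsto (mu lam) atTop atBot := by
  have hsq : Tendsto (fun x : ℝ => x ^ 2 * π ^ 2) atTop atTop :=
    (tendsto_pow_atTop two_ne_zero).atTop_mul_const (by positivity)
  have := hsq.atTop_mul_atBot₀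
    (tendsto_atBot_add_const_left _ lam (tendsto_neg_atTop_atBot.comp hsq))
  refine this.congr fun x => ?_
  simp only [mu, Function.comp_apply]
  ring

lemma exists_abs_inv_mu_pnat_le (lam : ℝ) : ∃ M, ∀ j : ℕ+, |(mu lam j)⁻¹| ≤ M := by
  have hcoe : Tendsto (fun j : ℕ+ => (j : ℝ)) cofinite atTop :=
    tendsto_natCast_atTop_atTop.comp (Nat.cofinite_eq_atTop ▸ PNat.coe_injective.tendsto_cofinite)
  have := ((tendsto_mu_atTop_atBot lam).comp hcoe).inv_tendsto_atBot.abs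
  obtain ⟨M, hM⟩ := this.bddAbove_range_of_cofinite
  exact ⟨M, fun j => hM ⟨j, rfl⟩⟩

theorem stmt6_general (lam : ℝ)
    (hlam : lam ∉ {x : ℝ | ∃ j k : ℕ+, j ≠ k ∧
      x = (j : ℝ) ^ 2 * π ^ 2 + (k : ℝ) ^ 2 * π ^ 2})
    (e : ℕ+ → ℂ)
    (he : Summable (fun j : ℕ+ => ‖e j‖))
    (hzero : ∀ p : ℕ,
      (∑' j : ℕ+, e j *
        (((-(j : ℝ) ^ 4 * π ^ 4 + lam * (j : ℝ) ^ 2 * π ^ 2 : ℝ) : ℂ))⁻¹ ^ p) = 0) :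
    ∀ j : ℕ+, e j = 0 := by
  obtain ⟨M, hM⟩ := exists_abs_inv_mu_pnat_le lam
  refine eq_zero_of_tsum_mul_ofReal_pow_eq_zero he hM
    (inv_injective.comp (mu_pnat_injective hlam)) fun p => ?_
  simpa [mu] using hzero p

/-- If λ ∉ 𝒩, μ_j := −j⁴π⁴ + λj²π² are all nonzero, and (e_j) ∈ ℓ¹ satisfies
∑_j e_j μ_j^{−p} = 0 for every integer p ≥ 0, then all e_j vanish. -/
theorem stmt6 (lam : ℝ)
    (hlam : lam ∉ {x : ℝ | ∃ j k : ℕ+, j ≠ k ∧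
      x = (j : ℝ) ^ 2 * π ^ 2 + (k : ℝ) ^ 2 * π ^ 2})
    (hmu : ∀ j : ℕ+, (-(j : ℝ) ^ 4 * π ^ 4 + lam * (j : ℝ) ^ 2 * π ^ 2) ≠ 0)
    (e : ℕ+ → ℂ)
    (he : Summable (fun j : ℕ+ => ‖e j‖))
    (hzero : ∀ p : ℕ,
      (∑' j : ℕ+, e j *
        (((-(j : ℝ) ^ 4 * π ^ 4 + lam * (j : ℝ) ^ 2 * π ^ 2 : ℝ) : ℂ))⁻¹ ^ p) = 0) :
    ∀ j : ℕ+, e j = 0 :=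
  stmt6_general lam hlam e he hzero
end

section
/- There exists a constant C > 0 such that for every positive integer j one has ∑_{k≥1, k≠j} k² / (|k⁴ − j⁴|² · j²) ≤ C / j⁶. -/
/-- There is C > 0 such that for every positive integer j,
∑_{k≥1, k≠j} k² / (|k⁴ − j⁴|² · j²) ≤ C / j⁶. -/
theorem stmt7 :
    ∃ C > (0 : ℝ), ∀ j : ℕ+,
      Summable (fun k : {k : ℕ+ // k ≠ j} =>
        ((k : ℕ+) : ℝ) ^ 2 / (|((k : ℕ+) : ℝ) ^ 4 - (j : ℝ) ^ 4| ^ 2 * (j : ℝ) ^ 2)) ∧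
      (∑' k : {k : ℕ+ // k ≠ j},
        ((k : ℕ+) : ℝ) ^ 2 / (|((k : ℕ+) : ℝ) ^ 4 - (j : ℝ) ^ 4| ^ 2 * (j : ℝ) ^ 2))
        ≤ C / (j : ℝ) ^ 6 := by
  have hS : Summable (fun n : ℤ => 1 / (n : ℝ) ^ 2) := by
    rw [Real.summable_one_div_int_pow]; norm_num
  refine ⟨∑' n : ℤ, 1 / (n : ℝ) ^ 2, ?_, ?_⟩
  · have h1 : (1 : ℝ) ≤ ∑' n : ℤ, 1 / (n : ℝ) ^ 2 := by
      have := Summable.le_tsum hS 1 (fun n _ => by positivity)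
      simpa using this
    linarith
  · intro j
    have hJ1 : (1 : ℝ) ≤ (j : ℝ) := by exact_mod_cast j.one_le
    have hJ0 : (0 : ℝ) < (j : ℝ) := by linarith
    set e : {k : ℕ+ // k ≠ j} → ℤ := fun k => ((k : ℕ+) : ℤ) - (j : ℤ) with he
    have einj : Function.Injective e := by
      intro a b hab
      simp only [he, sub_left_inj] at hab
      have : (a : ℕ+) = (b : ℕ+) := by exact_mod_cast hab
      exact Subtype.ext this
    have key : ∀ k : {k : ℕ+ // k ≠ j},
        ((k : ℕ+) : ℝ) ^ 2 / (|((k : ℕ+) : ℝ) ^ 4 - (j : ℝ) ^ 4| ^ 2 * (j : ℝ) ^ 2)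
          ≤ (1 / (j : ℝ) ^ 6) * (1 / ((e k : ℤ) : ℝ) ^ 2) := by
      intro k
      have hx1 : (1 : ℝ) ≤ ((k : ℕ+) : ℝ) := by exact_mod_cast (k : ℕ+).one_le
      have hx0 : (0 : ℝ) < ((k : ℕ+) : ℝ) := by linarith
      set x : ℝ := ((k : ℕ+) : ℝ) with hxdef
      have hne : x ≠ (j : ℝ) := by
        intro h
        have h' : (((k : ℕ+) : ℕ) : ℝ) = (((j : ℕ+) : ℕ) : ℝ) := h
        exact k.2 (PNat.coe_injective (Nat.cast_injective h'))
      have hcast : ((e k : ℤ) : ℝ) = x - (j : ℝ) := by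
        simp only [he]
        push_cast
        ring
      rw [hcast]
      have hsub : (0 : ℝ) < (x - (j : ℝ)) ^ 2 := by
        have : x - (j : ℝ) ≠ 0 := sub_ne_zero.mpr hne
        positivity
      have habs : |x ^ 4 - (j : ℝ) ^ 4| ^ 2 = (x ^ 4 - (j : ℝ) ^ 4) ^ 2 := sq_abs _
      rw [habs]
      have hden : (0 : ℝ) < (x ^ 4 - (j : ℝ) ^ 4) ^ 2 * (j : ℝ) ^ 2 := by
        have h4 : x ^ 4 - (j : ℝ) ^ 4 ≠ 0 := by
          rcases hne.lt_or_gt with hlt | hgt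
          · have := pow_lt_pow_left₀ hlt hx0.le (by norm_num : 4 ≠ 0)
            intro h; linarith
          · have := pow_lt_pow_left₀ hgt hJ0.le (by norm_num : 4 ≠ 0)
            intro h; linarith
        positivity
      rw [one_div_mul_one_div]
      rw [div_le_div_iff₀ hden (by positivity)]
      -- goal: x ^ 2 * ((j:ℝ)^6 * (x - j)^2) ≤ 1 * ((x^4 - j^4)^2 * j^2)
      have h1 : x * (j : ℝ) ^ 2 ≤ x ^ 3 + x ^ 2 * (j : ℝ) + x * (j : ℝ) ^ 2 + (j : ℝ) ^ 3 := by
        nlinarith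
      have h2 : (x * (j : ℝ) ^ 2) ^ 2 ≤ (x ^ 3 + x ^ 2 * (j : ℝ) + x * (j : ℝ) ^ 2 + (j : ℝ) ^ 3) ^ 2 := by
        have hpos : (0 : ℝ) ≤ x * (j : ℝ) ^ 2 := by positivity
        nlinarith
      nlinarith [mul_le_mul_of_nonneg_left h2 (mul_nonneg (sq_nonneg (x - (j : ℝ))) (sq_nonneg (j : ℝ)))]
    have hh : Summable (fun k : {k : ℕ+ // k ≠ j} =>
        (1 / (j : ℝ) ^ 6) * (1 / ((e k : ℤ) : ℝ) ^ 2)) :=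
      (hS.comp_injective einj).mul_left _
    have hf : Summable (fun k : {k : ℕ+ // k ≠ j} =>
        ((k : ℕ+) : ℝ) ^ 2 / (|((k : ℕ+) : ℝ) ^ 4 - (j : ℝ) ^ 4| ^ 2 * (j : ℝ) ^ 2)) :=
      Summable.of_nonneg_of_le (fun k => by positivity) key hh
    refine ⟨hf, ?_⟩
    calc (∑' k : {k : ℕ+ // k ≠ j},
        ((k : ℕ+) : ℝ) ^ 2 / (|((k : ℕ+) : ℝ) ^ 4 - (j : ℝ) ^ 4| ^ 2 * (j : ℝ) ^ 2))
        ≤ ∑' k : {k : ℕ+ // k ≠ j}, (1 / (j : ℝ) ^ 6) * (1 / ((e k : ℤ) : ℝ) ^ 2) :=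
          Summable.tsum_le_tsum key hf hh
      _ = (1 / (j : ℝ) ^ 6) * ∑' k : {k : ℕ+ // k ≠ j}, (1 / ((e k : ℤ) : ℝ) ^ 2) :=
          tsum_mul_left
      _ ≤ (1 / (j : ℝ) ^ 6) * ∑' n : ℤ, 1 / (n : ℝ) ^ 2 := by
          apply mul_le_mul_of_nonneg_left _ (by positivity)
          exact Summable.tsum_le_tsum_of_inj e einj (fun c _ => by positivity)
            (fun b => le_refl _) (hS.comp_injective einj) hS
      _ = (∑' n : ℤ, 1 / (n : ℝ) ^ 2) / (j : ℝ) ^ 6 := by ring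
end

section
/- There exists a constant C > 0 such that for every positive integer j one has ∑_{k≥1, k≠j} k⁶ / (j⁴ − k⁴)² ≤ C. -/
/-- There is C > 0 such that for every positive integer j,
∑_{k≥1, k≠j} k⁶ / (j⁴ − k⁴)² ≤ C. -/
theorem stmt8 :
    ∃ C > (0 : ℝ), ∀ j : ℕ+,
      Summable (fun k : {k : ℕ+ // k ≠ j} =>
        ((k : ℕ+) : ℝ) ^ 6 / ((j : ℝ) ^ 4 - ((k : ℕ+) : ℝ) ^ 4) ^ 2) ∧
      (∑' k : {k : ℕ+ // k ≠ j},
        ((k : ℕ+) : ℝ) ^ 6 / ((j : ℝ) ^ 4 - ((k : ℕ+) : ℝ) ^ 4) ^ 2) ≤ C := by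
  have hg : Summable (fun n : ℤ => 1 / (n : ℝ) ^ 2) := by
    rw [Real.summable_one_div_int_pow]; norm_num
  refine ⟨∑' n : ℤ, 1 / (n : ℝ) ^ 2, ?_, ?_⟩
  · exact Summable.tsum_pos hg (fun n => by positivity) 1 (by norm_num)
  intro j
  set f : {k : ℕ+ // k ≠ j} → ℝ := fun k =>
    ((k : ℕ+) : ℝ) ^ 6 / ((j : ℝ) ^ 4 - ((k : ℕ+) : ℝ) ^ 4) ^ 2 with hf_def
  set i : {k : ℕ+ // k ≠ j} → ℤ := fun k => (j : ℤ) - ((k : ℕ+) : ℤ) with hi_def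
  have hinj : Function.Injective i := by
    intro a b hab
    simp only [hi_def, sub_right_inj] at hab
    exact Subtype.ext (by exact_mod_cast hab)
  have key : ∀ k : {k : ℕ+ // k ≠ j}, f k ≤ 1 / ((i k : ℤ) : ℝ) ^ 2 := by
    rintro ⟨k, hk⟩
    have hx : (1 : ℝ) ≤ (j : ℝ) := by exact_mod_cast j.one_le
    have hy : (1 : ℝ) ≤ (k : ℝ) := by exact_mod_cast k.one_le
    have hne : (j : ℝ) ≠ (k : ℝ) := by
      intro h
      exact hk (by exact_mod_cast h.symm)
    have hne4 : (j : ℝ) ^ 4 ≠ (k : ℝ) ^ 4 := by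
      rcases lt_trichotomy (j : ℝ) (k : ℝ) with h | h | h
      · exact ne_of_lt (pow_lt_pow_left₀ h (by linarith) (by norm_num))
      · exact absurd h hne
      · exact ne_of_gt (pow_lt_pow_left₀ h (by linarith) (by norm_num))
    have hD : ((j : ℝ) ^ 4 - (k : ℝ) ^ 4) ≠ 0 := sub_ne_zero.mpr hne4
    have hd : (j : ℝ) - (k : ℝ) ≠ 0 := sub_ne_zero.mpr hne
    simp only [hf_def, hi_def]
    push_cast
    rw [div_le_div_iff₀ (by positivity) (by positivity)]
    have hBA : (k : ℝ) ^ 3 ≤ ((j : ℝ) + k) * ((j : ℝ) ^ 2 + (k : ℝ) ^ 2) := by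
      nlinarith
    have hB2 : (k : ℝ) ^ 6 ≤ (((j : ℝ) + k) * ((j : ℝ) ^ 2 + (k : ℝ) ^ 2)) ^ 2 := by
      nlinarith [pow_nonneg (le_trans zero_le_one hy) 3]
    nlinarith [mul_le_mul_of_nonneg_right hB2 (sq_nonneg ((j : ℝ) - k))]
  have hgi : Summable (fun k => 1 / ((i k : ℤ) : ℝ) ^ 2) := hg.comp_injective hinj
  have hf : Summable f := Summable.of_nonneg_of_le (fun k => by positivity) key hgi
  refine ⟨hf, ?_⟩
  exact Summable.tsum_le_tsum_of_inj i hinj (fun c _ => by positivity) key hf hg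
end

section
/- There exists a constant C > 0 such that for every positive integer j one has ∑_{k≥1, k≠j} 1 / |j⁴ − k⁴| ≤ C (1 + log j) / j³. -/
open Finset Real


private lemma key_ineq (x : ℝ) (hx : 1 ≤ x) :
    3/(x+1)^4 ≤ 1/x^3 - 1/(x+1)^3 := by
  have h1 : (0:ℝ) < x := by linarith
  have h2 : (0:ℝ) < x + 1 := by linarith
  rw [div_sub_div _ _ (by positivity) (by positivity),
    div_le_div_iff₀ (by positivity) (by positivity)]
  nlinarith [pow_pos h1 3, pow_pos h2 3, sq_nonneg x, mul_pos h1 h2]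

private lemma tele (j : ℕ) (hj : 1 ≤ j) (N : ℕ) :
    ∑ m ∈ Finset.Ico (j+1) N, (1:ℝ)/(m:ℝ)^4 ≤ 1/(3*(j:ℝ)^3) := by
  have hjR : (0:ℝ) < j := by exact_mod_cast hj
  have key : ∀ n : ℕ, ∑ m ∈ Finset.Ico (j+1) (n+1), (3:ℝ)/(m:ℝ)^4
      ≤ 1/(j:ℝ)^3 - 1/((max n j : ℕ):ℝ)^3 := by
    intro n
    induction n with
    | zero =>
      rw [Finset.Ico_eq_empty (by omega)]
      simp [Nat.max_eq_right (Nat.zero_le j)]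
    | succ n ih =>
      rcases le_or_gt (n+1) j with h | h
      · rw [Finset.Ico_eq_empty (by omega), max_eq_right (by omega)]
        simp
      · have hnj : j ≤ n := by omega
        have hn1 : (1:ℝ) ≤ n := by exact_mod_cast le_trans hj hnj
        rw [Finset.sum_Ico_succ_top (by omega), max_eq_left (by omega)]
        rw [max_eq_left hnj] at ih
        have hk := key_ineq (n:ℝ) hn1
        have hcast : ((n+1:ℕ):ℝ) = (n:ℝ) + 1 := by push_cast; ring
        rw [hcast]
        linarith
  rcases N with _ | n
  · simp [show (0:ℝ) < 1/(3*(j:ℝ)^3) from by positivity, le_of_lt]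
  · have h := key n
    have hmax : (0:ℝ) < ((max n j : ℕ):ℝ) := by
      have : 1 ≤ max n j := le_trans hj (le_max_right _ _)
      exact_mod_cast this
    have h3 : ∑ m ∈ Finset.Ico (j+1) (n+1), (3:ℝ)/(m:ℝ)^4
        = 3 * ∑ m ∈ Finset.Ico (j+1) (n+1), (1:ℝ)/(m:ℝ)^4 := by
      rw [Finset.mul_sum]; apply Finset.sum_congr rfl; intro m _; ring
    have h4 : (0:ℝ) ≤ 1/((max n j : ℕ):ℝ)^3 := by positivity
    rw [h3] at h
    rw [show (1:ℝ)/(3*(j:ℝ)^3) = (1/(j:ℝ)^3)/3 by ring]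
    linarith

private lemma harm_cast (n : ℕ) :
    ((harmonic n : ℚ) : ℝ) = ∑ i ∈ Finset.range n, 1/((i:ℝ)+1) := by
  rw [harmonic]
  push_cast
  apply Finset.sum_congr rfl
  intro i _
  rw [one_div]

private lemma main_nat (j : ℕ) (hj : 1 ≤ j) (M : ℕ) :
    ∑ k ∈ Finset.range M, (if k = j ∨ k = 0 then (0:ℝ) else 1/|(j:ℝ)^4 - (k:ℝ)^4|)
      ≤ 3 * (1 + Real.log j) / (j:ℝ)^3 := by
  have hjR : (1:ℝ) ≤ (j:ℝ) := by exact_mod_cast hj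
  have hj0 : (0:ℝ) < (j:ℝ) := by linarith
  set φ1 : ℕ → ℝ := fun k => if k ∈ Finset.Ico 1 j then 1/(((j:ℝ)-(k:ℝ))*(j:ℝ)^3) else 0 with hφ1
  set φ2 : ℕ → ℝ := fun k => if k ∈ Finset.Ico (j+1) (2*j+1) then 1/(((k:ℝ)-(j:ℝ))*(j:ℝ)^3) else 0 with hφ2
  set φ3 : ℕ → ℝ := fun k => if k ∈ Finset.Ico (2*j+1) M then 16/(k:ℝ)^4 else 0 with hφ3
  have hφ1nn : ∀ k, 0 ≤ φ1 k := by
    intro k; rw [hφ1]; dsimp only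
    split_ifs with h
    · have hk : k < j := (Finset.mem_Ico.mp h).2
      have hk' : (k:ℝ) < j := by exact_mod_cast hk
      have h2 : (0:ℝ) < (j:ℝ) - k := by linarith
      positivity
    · exact le_refl 0
  have hφ2nn : ∀ k, 0 ≤ φ2 k := by
    intro k; rw [hφ2]; dsimp only
    split_ifs with h
    · have hk : j + 1 ≤ k := (Finset.mem_Ico.mp h).1
      have hk' : (j:ℝ) + 1 ≤ k := by exact_mod_cast hk
      have h2 : (0:ℝ) < (k:ℝ) - j := by linarith
      positivity
    · exact le_refl 0
  have hφ3nn : ∀ k, 0 ≤ φ3 k := by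
    intro k; rw [hφ3]; dsimp only
    split_ifs with h
    · have hk : 2*j + 1 ≤ k := (Finset.mem_Ico.mp h).1
      have hk' : (0:ℝ) < k := by
        have : (0:ℕ) < k := by omega
        exact_mod_cast this
      positivity
    · exact le_refl 0
  -- pointwise bound
  have hpt : ∀ k ∈ Finset.range M,
      (if k = j ∨ k = 0 then (0:ℝ) else 1/|(j:ℝ)^4 - (k:ℝ)^4|) ≤ φ1 k + φ2 k + φ3 k := by
    intro k hk
    have hkM : k < M := Finset.mem_range.mp hk
    by_cases h0 : k = j ∨ k = 0
    · rw [if_pos h0]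
      have := hφ1nn k; have := hφ2nn k; have := hφ3nn k; linarith
    · rw [if_neg h0]
      push_neg at h0
      obtain ⟨hkj, hk0⟩ := h0
      have hk1 : 1 ≤ k := Nat.one_le_iff_ne_zero.mpr hk0
      have hkR : (1:ℝ) ≤ (k:ℝ) := by exact_mod_cast hk1
      have hk0R : (0:ℝ) < (k:ℝ) := by linarith
      rcases lt_trichotomy k j with h | h | h
      · have hkj' : (k:ℝ) < j := by exact_mod_cast h
        have hmem : k ∈ Finset.Ico 1 j := Finset.mem_Ico.mpr ⟨hk1, h⟩
        have hcube : (k:ℝ)^3 ≤ (j:ℝ)^3 := by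
          apply pow_le_pow_left₀ (by positivity) (le_of_lt hkj')
        have hpos : (0:ℝ) < (j:ℝ)^4 - (k:ℝ)^4 := by
          have := pow_lt_pow_left₀ hkj' (le_of_lt hk0R) (by norm_num : (4:ℕ) ≠ 0)
          linarith
        have habs : |(j:ℝ)^4 - (k:ℝ)^4| = (j:ℝ)^4 - (k:ℝ)^4 := abs_of_pos hpos
        have hden : ((j:ℝ)-(k:ℝ))*(j:ℝ)^3 ≤ (j:ℝ)^4 - (k:ℝ)^4 := by
          nlinarith [mul_nonneg (le_of_lt hk0R) (sub_nonneg.mpr hcube)]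
        have hd0 : (0:ℝ) < ((j:ℝ)-(k:ℝ))*(j:ℝ)^3 := by
          have : (0:ℝ) < (j:ℝ)-(k:ℝ) := by linarith
          positivity
        have hb : 1/|(j:ℝ)^4-(k:ℝ)^4| ≤ φ1 k := by
          rw [habs, hφ1]; dsimp only; rw [if_pos hmem]
          exact one_div_le_one_div_of_le hd0 hden
        have := hφ2nn k; have := hφ3nn k; linarith
      · exact absurd h hkj
      · have hjk' : (j:ℝ) < k := by exact_mod_cast h
        have hpos : (0:ℝ) < (k:ℝ)^4 - (j:ℝ)^4 := by
          have := pow_lt_pow_left₀ hjk' (le_of_lt hj0) (by norm_num : (4:ℕ) ≠ 0)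
          linarith
        have habs : |(j:ℝ)^4 - (k:ℝ)^4| = (k:ℝ)^4 - (j:ℝ)^4 := by
          rw [abs_of_neg (by linarith), neg_sub]
        have hcube : (j:ℝ)^3 ≤ (k:ℝ)^3 := by
          apply pow_le_pow_left₀ (by positivity) (le_of_lt hjk')
        rcases le_or_gt k (2*j) with h2 | h2
        · have hmem : k ∈ Finset.Ico (j+1) (2*j+1) := Finset.mem_Ico.mpr ⟨by omega, by omega⟩
          have hden : ((k:ℝ)-(j:ℝ))*(j:ℝ)^3 ≤ (k:ℝ)^4 - (j:ℝ)^4 := by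
            nlinarith [mul_nonneg (by linarith : (0:ℝ) ≤ (j:ℝ)) (sub_nonneg.mpr hcube),
              mul_nonneg (by linarith : (0:ℝ) ≤ (k:ℝ)-(j:ℝ)) (sub_nonneg.mpr hcube)]
          have hd0 : (0:ℝ) < ((k:ℝ)-(j:ℝ))*(j:ℝ)^3 := by
            have : (0:ℝ) < (k:ℝ)-(j:ℝ) := by linarith
            positivity
          have hb : 1/|(j:ℝ)^4-(k:ℝ)^4| ≤ φ2 k := by
            rw [habs, hφ2]; dsimp only; rw [if_pos hmem]
            exact one_div_le_one_div_of_le hd0 hden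
          have := hφ1nn k; have := hφ3nn k; linarith
        · have hmem : k ∈ Finset.Ico (2*j+1) M := Finset.mem_Ico.mpr ⟨by omega, hkM⟩
          have h2R : 2*(j:ℝ) < (k:ℝ) := by exact_mod_cast h2
          have h16 : 16*(j:ℝ)^4 ≤ (k:ℝ)^4 := by
            have := pow_le_pow_left₀ (by positivity : (0:ℝ) ≤ 2*(j:ℝ)) (le_of_lt h2R) 4
            nlinarith [this]
          have hb : 1/|(j:ℝ)^4-(k:ℝ)^4| ≤ φ3 k := by
            rw [habs, hφ3]; dsimp only; rw [if_pos hmem]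
            rw [div_le_div_iff₀ hpos (by positivity)]
            nlinarith
          have := hφ1nn k; have := hφ2nn k; linarith
  have hsplit : ∑ k ∈ Finset.range M, (if k = j ∨ k = 0 then (0:ℝ) else 1/|(j:ℝ)^4 - (k:ℝ)^4|)
      ≤ (∑ k ∈ Finset.range M, φ1 k) + (∑ k ∈ Finset.range M, φ2 k) + (∑ k ∈ Finset.range M, φ3 k) := by
    rw [← Finset.sum_add_distrib, ← Finset.sum_add_distrib]
    exact Finset.sum_le_sum hpt
  -- Sum of φ1
  have hS1 : ∑ k ∈ Finset.range M, φ1 k ≤ ((harmonic (j-1) : ℚ):ℝ) * (1/(j:ℝ)^3) := by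
    rw [hφ1]
    rw [Finset.sum_ite_mem]
    have hsub : Finset.range M ∩ Finset.Ico 1 j ⊆ Finset.Ico 1 j := Finset.inter_subset_right
    have hle : ∑ k ∈ Finset.range M ∩ Finset.Ico 1 j, 1/(((j:ℝ)-(k:ℝ))*(j:ℝ)^3)
        ≤ ∑ k ∈ Finset.Ico 1 j, 1/(((j:ℝ)-(k:ℝ))*(j:ℝ)^3) := by
      apply Finset.sum_le_sum_of_subset_of_nonneg hsub
      intro k hk _
      have hk' : k < j := (Finset.mem_Ico.mp hk).2
      have : (k:ℝ) < j := by exact_mod_cast hk'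
      have h2 : (0:ℝ) < (j:ℝ) - k := by linarith
      positivity
    refine le_trans hle (le_of_eq ?_)
    rw [harm_cast, Finset.sum_mul, Finset.sum_Ico_eq_sum_range]
    rw [← Finset.sum_range_reflect (fun i => 1/((i:ℝ)+1) * (1/(j:ℝ)^3)) (j-1)]
    apply Finset.sum_congr rfl
    intro i hi
    have hi' : i < j - 1 := Finset.mem_range.mp hi
    have e1 : (1 + i : ℕ) = j - (j - 1 - i) := by omega
    have e2 : ((j - 1 - 1 - i : ℕ):ℝ) = (j:ℝ) - 1 - 1 - i := by
      have h1 : (j - 1 - 1 - i : ℕ) = j - (2 + i) := by omega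
      rw [h1, Nat.cast_sub (by omega)]
      push_cast; ring
    rw [e2]
    have e3 : ((1 + i : ℕ):ℝ) = 1 + (i:ℝ) := by push_cast; ring
    rw [e3]
    have hji : ((j:ℝ) - (1 + (i:ℝ))) = ((j:ℝ) - 1 - 1 - i) + 1 := by ring
    rw [hji]
    set x := (j:ℝ) - 1 - 1 - i
    rw [div_mul_div_comm, one_mul]
  -- Sum of φ2
  have hS2 : ∑ k ∈ Finset.range M, φ2 k ≤ ((harmonic j : ℚ):ℝ) * (1/(j:ℝ)^3) := by
    rw [hφ2]
    rw [Finset.sum_ite_mem]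
    have hsub : Finset.range M ∩ Finset.Ico (j+1) (2*j+1) ⊆ Finset.Ico (j+1) (2*j+1) :=
      Finset.inter_subset_right
    have hle : ∑ k ∈ Finset.range M ∩ Finset.Ico (j+1) (2*j+1), 1/(((k:ℝ)-(j:ℝ))*(j:ℝ)^3)
        ≤ ∑ k ∈ Finset.Ico (j+1) (2*j+1), 1/(((k:ℝ)-(j:ℝ))*(j:ℝ)^3) := by
      apply Finset.sum_le_sum_of_subset_of_nonneg hsub
      intro k hk _
      have hk' : j + 1 ≤ k := (Finset.mem_Ico.mp hk).1
      have : (j:ℝ) + 1 ≤ k := by exact_mod_cast hk'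
      have h2 : (0:ℝ) < (k:ℝ) - j := by linarith
      positivity
    refine le_trans hle (le_of_eq ?_)
    rw [harm_cast, Finset.sum_mul, Finset.sum_Ico_eq_sum_range]
    have e0 : 2*j + 1 - (j+1) = j := by omega
    rw [e0]
    apply Finset.sum_congr rfl
    intro i hi
    have e3 : ((j + 1 + i : ℕ):ℝ) = (j:ℝ) + 1 + i := by push_cast; ring
    rw [e3]
    have hji : ((j:ℝ) + 1 + i - (j:ℝ)) = (i:ℝ) + 1 := by ring
    rw [hji, div_mul_div_comm, one_mul]
  -- Sum of φ3
  have hS3 : ∑ k ∈ Finset.range M, φ3 k ≤ (2/3) * (1/(j:ℝ)^3) := by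
    rw [hφ3]
    rw [Finset.sum_ite_mem]
    have hsub : Finset.range M ∩ Finset.Ico (2*j+1) M = Finset.Ico (2*j+1) M := by
      apply Finset.inter_eq_right.mpr
      intro k hk
      exact Finset.mem_range.mpr (Finset.mem_Ico.mp hk).2
    rw [hsub]
    have h16 : ∑ k ∈ Finset.Ico (2*j+1) M, 16/(k:ℝ)^4
        = 16 * ∑ k ∈ Finset.Ico (2*j+1) M, 1/(k:ℝ)^4 := by
      rw [Finset.mul_sum]
      apply Finset.sum_congr rfl
      intro k _; ring
    rw [h16]
    have ht := tele (2*j) (by omega) M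
    have hc : ((2*j : ℕ):ℝ) = 2*(j:ℝ) := by push_cast; ring
    rw [hc] at ht
    calc 16 * ∑ k ∈ Finset.Ico (2*j+1) M, 1/(k:ℝ)^4
        ≤ 16 * (1/(3*(2*(j:ℝ))^3)) := by linarith
      _ = (2/3) * (1/(j:ℝ)^3) := by field_simp; ring
  -- harmonic bounds
  have hh1 : ((harmonic (j-1) : ℚ):ℝ) ≤ ((harmonic j : ℚ):ℝ) := by
    have : harmonic (j-1) ≤ harmonic j := by
      have e : j - 1 + 1 = j := by omega
      have h0 : (0:ℚ) ≤ (↑(j-1+1))⁻¹ := by positivity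
      calc harmonic (j-1) ≤ harmonic (j-1) + (↑(j-1+1))⁻¹ := by linarith
        _ = harmonic (j-1+1) := (harmonic_succ _).symm
        _ = harmonic j := by rw [e]
    exact_mod_cast this
  have hh2 : ((harmonic j : ℚ):ℝ) ≤ 1 + Real.log j := harmonic_le_one_add_log j
  have hlog : (0:ℝ) ≤ Real.log j := Real.log_nonneg hjR
  have hinv : (0:ℝ) < 1/(j:ℝ)^3 := by positivity
  have hfin : ((harmonic (j-1) : ℚ):ℝ) * (1/(j:ℝ)^3) + ((harmonic j : ℚ):ℝ) * (1/(j:ℝ)^3)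
      + (2/3) * (1/(j:ℝ)^3) ≤ 3 * (1 + Real.log j) / (j:ℝ)^3 := by
    have h1 : ((harmonic (j-1) : ℚ):ℝ) * (1/(j:ℝ)^3) ≤ (1 + Real.log j) * (1/(j:ℝ)^3) := by
      apply mul_le_mul_of_nonneg_right (le_trans hh1 hh2) (le_of_lt hinv)
    have h2 : ((harmonic j : ℚ):ℝ) * (1/(j:ℝ)^3) ≤ (1 + Real.log j) * (1/(j:ℝ)^3) := by
      apply mul_le_mul_of_nonneg_right hh2 (le_of_lt hinv)
    have h3 : (2/3 : ℝ) * (1/(j:ℝ)^3) ≤ (1 + Real.log j) * (1/(j:ℝ)^3) := by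
      apply mul_le_mul_of_nonneg_right (by linarith) (le_of_lt hinv)
    have e : 3 * (1 + Real.log j) / (j:ℝ)^3 = (1 + Real.log j) * (1/(j:ℝ)^3)
        + (1 + Real.log j) * (1/(j:ℝ)^3) + (1 + Real.log j) * (1/(j:ℝ)^3) := by ring
    rw [e]
    linarith
  linarith


/-- There is C > 0 such that for every positive integer j,
∑_{k≥1, k≠j} 1 / |j⁴ − k⁴| ≤ C (1 + log j) / j³. -/
theorem stmt9 :
    ∃ C > (0 : ℝ), ∀ j : ℕ+,
      Summable (fun k : {k : ℕ+ // k ≠ j} =>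
        1 / |(j : ℝ) ^ 4 - ((k : ℕ+) : ℝ) ^ 4|) ∧
      (∑' k : {k : ℕ+ // k ≠ j}, 1 / |(j : ℝ) ^ 4 - ((k : ℕ+) : ℝ) ^ 4|)
        ≤ C * (1 + Real.log (j : ℝ)) / (j : ℝ) ^ 3 := by
  refine ⟨3, by norm_num, fun j => ?_⟩
  set f : {k : ℕ+ // k ≠ j} → ℝ := fun k => 1 / |(j : ℝ) ^ 4 - ((k : ℕ+) : ℝ) ^ 4| with hf
  have hbound : ∀ F : Finset {k : ℕ+ // k ≠ j},
      ∑ k ∈ F, f k ≤ 3 * (1 + Real.log (j:ℝ)) / (j:ℝ)^3 := by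
    intro F
    set g : ℕ → ℝ := fun n => if n = (j:ℕ) ∨ n = 0 then (0:ℝ) else 1/|((j:ℕ):ℝ)^4 - (n:ℝ)^4| with hg
    have himg : ∑ k ∈ F, f k = ∑ n ∈ F.image (fun k : {k : ℕ+ // k ≠ j} => ((k : ℕ+) : ℕ)), g n := by
      rw [Finset.sum_image]
      · apply Finset.sum_congr rfl
        intro k _
        have h1 : ((k : ℕ+) : ℕ) ≠ (j:ℕ) := fun h => k.prop (PNat.coe_injective h)
        have h2 : ((k : ℕ+) : ℕ) ≠ 0 := (k : ℕ+).pos.ne'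
        rw [hg]; dsimp only
        rw [if_neg (by tauto)]
      · intro a _ b _ h
        exact Subtype.ext (PNat.coe_injective h)
    obtain ⟨M, hM⟩ := Finset.exists_nat_subset_range
      (F.image (fun k : {k : ℕ+ // k ≠ j} => ((k : ℕ+) : ℕ)))
    have hgnn : ∀ n ∈ Finset.range M,
        n ∉ F.image (fun k : {k : ℕ+ // k ≠ j} => ((k : ℕ+) : ℕ)) → 0 ≤ g n := by
      intro n _ _
      rw [hg]; dsimp only
      split_ifs with h
      · exact le_refl 0
      · positivity
    have hle : ∑ n ∈ F.image (fun k : {k : ℕ+ // k ≠ j} => ((k : ℕ+) : ℕ)), g n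
        ≤ ∑ n ∈ Finset.range M, g n :=
      Finset.sum_le_sum_of_subset_of_nonneg hM hgnn
    have hmain := main_nat (j:ℕ) j.one_le M
    have hcast : ((j:ℕ):ℝ) = ((j:ℕ+):ℝ) := by norm_cast
    rw [himg]
    calc ∑ n ∈ F.image (fun k : {k : ℕ+ // k ≠ j} => ((k : ℕ+) : ℕ)), g n
        ≤ ∑ n ∈ Finset.range M, g n := hle
      _ ≤ 3 * (1 + Real.log ((j:ℕ):ℝ)) / ((j:ℕ):ℝ)^3 := hmain
      _ = 3 * (1 + Real.log (j:ℝ)) / (j:ℝ)^3 := by rw [hcast]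
  have hfnn : (0 : {k : ℕ+ // k ≠ j} → ℝ) ≤ f := by
    intro k
    rw [hf]
    positivity
  have hs : Summable f := summable_of_sum_le hfnn hbound
  exact ⟨hs, Summable.tsum_le_of_sum_le hs hbound⟩
end

section
/- Let λ ∈ ℝ, set μ_j := −j⁴π⁴ + λ j²π², and let a ∈ ℝ with a ∉ 𝒩₁. Then there exists a constant C > 0 such that for every square-summable sequence (ĉ_k)_{k≥1} of complex numbers and every positive integer j, the series ∑_{k≥1, k≠j} ĉ_k · (a + μ_k) / ((a + μ_k − μ_j) · √2 kπ) converges absolutely and its absolute value is at most C · (∑_{k≥1} |ĉ_k|²)^{1/2}. -/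
/-!
The coefficient of `ĉ_k` has numerator `a + μ_k = O(k⁴)`. Once `max j k` is large, the quartic
term dominates the eigenvalue gap, `|a + μ_k - μ_j| ≥ (π⁴/2) |k⁴ - j⁴| ≥ (π⁴/2) k³ |k - j|`, so the
coefficient is `O(1 / |k - j|)` uniformly in `j`; the finitely many remaining pairs only enlarge the
constant. Cauchy–Schwarz against `∑_{n ∈ ℤ} 1 / n²` then gives the bound.
-/

open Real Filter

theorem summable_mul_and_tsum_mul_le_sqrt_mul_sqrt {ι : Type*} {f g : ι → ℝ}
    (hf : ∀ i, 0 ≤ f i) (hg : ∀ i, 0 ≤ g i)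
    (hf2 : Summable fun i => f i ^ 2) (hg2 : Summable fun i => g i ^ 2) :
    (Summable fun i => f i * g i) ∧
      ∑' i, f i * g i ≤ √(∑' i, f i ^ 2) * √(∑' i, g i ^ 2) := by
  simpa [sqrt_eq_rpow] using summable_and_inner_le_Lp_mul_Lq_tsum_of_nonneg .two_two hf hg
    (by simpa using hf2) (by simpa using hg2)

theorem summable_sq_and_tsum_sq_le_of_abs_le_div {ι : Type*} {e : ι → ℤ}
    (he : Function.Injective e) {g : ι → ℝ} {B : ℝ} (hg : ∀ i, |g i| ≤ B / |(e i : ℝ)|) :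
    (Summable fun i => g i ^ 2) ∧
      ∑' i, g i ^ 2 ≤ B ^ 2 * ∑' n : ℤ, 1 / (n : ℝ) ^ 2 := by
  have hsum : Summable fun n : ℤ => B ^ 2 * (1 / (n : ℝ) ^ 2) :=
    (summable_one_div_int_pow.mpr one_lt_two).mul_left _
  have hle : ∀ i, g i ^ 2 ≤ B ^ 2 * (1 / (e i : ℝ) ^ 2) := fun i => by
    simpa only [div_pow, sq_abs, mul_one_div] using pow_le_pow_left₀ (abs_nonneg _) (hg i) 2
  have hg2 : Summable fun i => g i ^ 2 :=
    .of_nonneg_of_le (fun i => sq_nonneg _) hle (hsum.comp_injective he)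
  refine ⟨hg2, ?_⟩
  rw [← tsum_mul_left]
  exact hg2.tsum_le_tsum_of_inj e he (fun n _ => by positivity) hle hsum

theorem summable_mul_abs_and_tsum_le_of_abs_le_div {ι : Type*} {e : ι → ℤ}
    (he : Function.Injective e) {f g : ι → ℝ} {B : ℝ} (hf : ∀ i, 0 ≤ f i)
    (hf2 : Summable fun i => f i ^ 2) (hg : ∀ i, |g i| ≤ B / |(e i : ℝ)|) :
    (Summable fun i => f i * |g i|) ∧
      ∑' i, f i * |g i| ≤ |B| * √(∑' n : ℤ, 1 / (n : ℝ) ^ 2) * √(∑' i, f i ^ 2) := by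
  obtain ⟨hg2, hg2_le⟩ := summable_sq_and_tsum_sq_le_of_abs_le_div he hg
  obtain ⟨hsum, hle⟩ := summable_mul_and_tsum_mul_le_sqrt_mul_sqrt hf
    (fun i => abs_nonneg (g i)) hf2 (by simpa only [sq_abs] using hg2)
  refine ⟨hsum, hle.trans ?_⟩
  rw [mul_comm, ← Real.sqrt_sq_eq_abs, ← Real.sqrt_mul (sq_nonneg B)]
  gcongr
  simpa only [sq_abs] using hg2_le

theorem one_le_abs_natCast_sub_natCast {m n : ℕ} (h : m ≠ n) : 1 ≤ |(m : ℝ) - n| := by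
  have : (m : ℤ) - n ≠ 0 := sub_ne_zero.2 (Nat.cast_injective.ne h)
  exact_mod_cast Int.one_le_abs this

theorem tendsto_max_cofinite_atTop {α : Type*} [LinearOrder α] [LocallyFiniteOrderBot α] :
    Tendsto (fun p : α × α => max p.1 p.2) cofinite atTop := by
  refine tendsto_atTop.2 fun b => eventually_cofinite.2 ?_
  refine ((Set.finite_Iio b).prod (Set.finite_Iio b)).subset fun p hp => ?_
  simp only [le_max_iff, not_or, not_le] at hp
  exact hp

noncomputable section

def eigenvalue (lam x : ℝ) : ℝ := -x ^ 4 * π ^ 4 + lam * x ^ 2 * π ^ 2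

/-- The paper's `(a + μ_x) / ((a + μ_x - μ_y) φ_x'(0))`, with `φ_x'(0) = √2 x π`. -/
def gapCoeff (lam a y x : ℝ) : ℝ :=
  (a + eigenvalue lam x) / ((a + eigenvalue lam x - eigenvalue lam y) * (√2 * x * π))

theorem abs_add_eigenvalue_le (lam a : ℝ) {x : ℝ} (hx : 1 ≤ x) :
    |a + eigenvalue lam x| ≤ (|a| + π ^ 4 + |lam| * π ^ 2) * x ^ 4 := by
  have hx2 : x ^ 2 ≤ x ^ 4 := pow_le_pow_right₀ hx (by norm_num : 2 ≤ 4)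
  have hx4 : 1 ≤ x ^ 4 := one_le_pow₀ hx
  calc |a + eigenvalue lam x| ≤ |a| + |-x ^ 4 * π ^ 4| + |lam * x ^ 2 * π ^ 2| := by
        rw [eigenvalue, ← add_assoc]; exact abs_add_three _ _ _
    _ = |a| + x ^ 4 * π ^ 4 + |lam| * π ^ 2 * x ^ 2 := by
        simp only [abs_mul, abs_neg, abs_pow, abs_of_pos pi_pos,
          abs_of_nonneg (zero_le_one.trans hx)]
        ring
    _ ≤ _ := by
        nlinarith [le_mul_of_one_le_right (abs_nonneg a) hx4,
          mul_le_mul_of_nonneg_left hx2 (by positivity : 0 ≤ |lam| * π ^ 2)]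

theorem pow_three_mul_abs_sub_le_abs_pow_four_sub {x y : ℝ} (hx : 0 ≤ x) (hy : 0 ≤ y) :
    x ^ 3 * |x - y| ≤ |x ^ 4 - y ^ 4| := by
  have h : x ^ 4 - y ^ 4 = (x - y) * (x ^ 3 + x ^ 2 * y + x * y ^ 2 + y ^ 3) := by ring
  rw [h, abs_mul, abs_of_nonneg (by positivity : 0 ≤ x ^ 3 + x ^ 2 * y + x * y ^ 2 + y ^ 3)]
  nlinarith [mul_nonneg (abs_nonneg (x - y)) (by positivity : 0 ≤ x ^ 2 * y + x * y ^ 2 + y ^ 3)]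

theorem max_pow_three_le_abs_pow_four_sub {x y : ℝ} (hx : 0 ≤ x) (hy : 0 ≤ y)
    (hxy : 1 ≤ |x - y|) :
    max x y ^ 3 ≤ |x ^ 4 - y ^ 4| := by
  rcases le_total y x with h | h
  · rw [max_eq_left h]
    nlinarith [pow_three_mul_abs_sub_le_abs_pow_four_sub hx hy, pow_nonneg hx 3]
  · rw [max_eq_right h, abs_sub_comm (x ^ 4)]
    rw [abs_sub_comm] at hxy
    nlinarith [pow_three_mul_abs_sub_le_abs_pow_four_sub hy hx, pow_nonneg hy 3]

theorem abs_sq_sub_mul_max_sq_le_abs_pow_four_sub (x y : ℝ) :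
    |x ^ 2 - y ^ 2| * max x y ^ 2 ≤ |x ^ 4 - y ^ 4| := by
  have h : x ^ 4 - y ^ 4 = (x ^ 2 - y ^ 2) * (x ^ 2 + y ^ 2) := by ring
  rw [h, abs_mul, abs_of_nonneg (by positivity : 0 ≤ x ^ 2 + y ^ 2)]
  have : max x y ^ 2 ≤ x ^ 2 + y ^ 2 := by
    rcases max_choice x y with h | h <;> rw [h] <;> nlinarith
  exact mul_le_mul_of_nonneg_left this (abs_nonneg _)

theorem half_pi_pow_four_mul_le_abs_add_eigenvalue_sub {lam a x y : ℝ} (hx : 0 ≤ x) (hy : 0 ≤ y)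
    (hxy : 1 ≤ |x - y|)
    (hlam : 4 * |lam| ≤ π ^ 2 * max x y ^ 2) (ha : 4 * |a| ≤ π ^ 4 * max x y ^ 3) :
    π ^ 4 / 2 * |x ^ 4 - y ^ 4| ≤ |a + eigenvalue lam x - eigenvalue lam y| := by
  have hgap : a + eigenvalue lam x - eigenvalue lam y
      = a + lam * π ^ 2 * (x ^ 2 - y ^ 2) - π ^ 4 * (x ^ 4 - y ^ 4) := by
    unfold eigenvalue; ring
  have htri : π ^ 4 * |x ^ 4 - y ^ 4|
      ≤ |a + eigenvalue lam x - eigenvalue lam y| + |a| + |lam| * π ^ 2 * |x ^ 2 - y ^ 2| :=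
    calc π ^ 4 * |x ^ 4 - y ^ 4|
        = |(a + lam * π ^ 2 * (x ^ 2 - y ^ 2)) - (a + eigenvalue lam x - eigenvalue lam y)| := by
          rw [hgap, sub_sub_cancel, abs_mul, abs_of_pos (by positivity : 0 < π ^ 4)]
      _ ≤ |a + lam * π ^ 2 * (x ^ 2 - y ^ 2)| + |a + eigenvalue lam x - eigenvalue lam y| :=
          abs_sub _ _
      _ ≤ _ := by
          have := abs_add_le a (lam * π ^ 2 * (x ^ 2 - y ^ 2))
          rw [abs_mul, abs_mul, abs_of_pos (by positivity : 0 < π ^ 2)] at this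
          linarith
  have hsq := abs_sq_sub_mul_max_sq_le_abs_pow_four_sub x y
  have hcube := max_pow_three_le_abs_pow_four_sub hx hy hxy
  nlinarith [mul_le_mul_of_nonneg_left hlam (by positivity : 0 ≤ π ^ 2 * |x ^ 2 - y ^ 2|),
    mul_le_mul_of_nonneg_left hsq (by positivity : 0 ≤ π ^ 4),
    mul_le_mul_of_nonneg_left hcube (by positivity : 0 ≤ π ^ 4)]

theorem abs_sub_mul_abs_gapCoeff_le {lam a x y : ℝ} (hx : 1 ≤ x) (hy : 0 ≤ y)
    (hxy : 1 ≤ |x - y|)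
    (hlam : 4 * |lam| ≤ π ^ 2 * max x y ^ 2) (ha : 4 * |a| ≤ π ^ 4 * max x y ^ 3) :
    |x - y| * |gapCoeff lam a y x| ≤ 2 * (|a| + π ^ 4 + |lam| * π ^ 2) / (√2 * π ^ 5) := by
  have hx0 : 0 < x := zero_lt_one.trans_le hx
  have hnum := abs_add_eigenvalue_le lam a hx
  have hden : π ^ 4 / 2 * (x ^ 3 * |x - y|) ≤ |a + eigenvalue lam x - eigenvalue lam y| :=
    (mul_le_mul_of_nonneg_left (pow_three_mul_abs_sub_le_abs_pow_four_sub hx0.le hy)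
      (by positivity)).trans (half_pi_pow_four_mul_le_abs_add_eigenvalue_sub hx0.le hy hxy hlam ha)
  have hxy0 : 0 < |x - y| := zero_lt_one.trans_le hxy
  rw [gapCoeff, abs_div, abs_mul, abs_of_pos (by positivity : 0 < √2 * x * π)]
  calc |x - y| * (|a + eigenvalue lam x| /
          (|a + eigenvalue lam x - eigenvalue lam y| * (√2 * x * π)))
      ≤ |x - y| * ((|a| + π ^ 4 + |lam| * π ^ 2) * x ^ 4 /
          (π ^ 4 / 2 * (x ^ 3 * |x - y|) * (√2 * x * π))) := by
        gcongr
    _ = 2 * (|a| + π ^ 4 + |lam| * π ^ 2) / (√2 * π ^ 5) := by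
        field_simp

theorem exists_abs_gapCoeff_le_div (lam a : ℝ) :
    ∃ B, ∀ j k : ℕ+, k ≠ j →
      |gapCoeff lam a j k| ≤ B / |((((k : ℕ) : ℤ) - (j : ℕ) : ℤ) : ℝ)| := by
  have hmax : Tendsto (fun p : ℕ+ × ℕ+ => max (p.2 : ℝ) (p.1 : ℝ)) cofinite atTop := by
    have := (tendsto_natCast_atTop_atTop (R := ℝ)).comp
      (tendsto_PNat_val_atTop_atTop.comp (tendsto_max_cofinite_atTop (α := ℕ+)))
    refine (this.comp (Equiv.prodComm ℕ+ ℕ+).injective.tendsto_cofinite).congr fun p => ?_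
    exact Monotone.map_max (f := fun n : ℕ+ => ((n : ℕ) : ℝ)) fun _ _ h => by
      dsimp only; exact_mod_cast h
  have hlarge : ∀ᶠ M : ℝ in atTop, 4 * |lam| ≤ π ^ 2 * M ^ 2 ∧ 4 * |a| ≤ π ^ 4 * M ^ 3 :=
    (((tendsto_pow_atTop two_ne_zero).const_mul_atTop (by positivity)).eventually_ge_atTop _).and
      (((tendsto_pow_atTop three_ne_zero).const_mul_atTop (by positivity)).eventually_ge_atTop _)
  have hev : ∀ᶠ p : ℕ+ × ℕ+ in cofinite,
      |(p.2 : ℝ) - p.1| * |gapCoeff lam a p.1 p.2|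
        ≤ 2 * (|a| + π ^ 4 + |lam| * π ^ 2) / (√2 * π ^ 5) := by
    filter_upwards [hmax.eventually hlarge] with ⟨j, k⟩ ⟨hlam, ha⟩
    rcases eq_or_ne k j with rfl | hkj
    · simp only [sub_self, abs_zero, zero_mul]; positivity
    exact abs_sub_mul_abs_gapCoeff_le (Nat.one_le_cast.2 k.pos) (by positivity)
      (one_le_abs_natCast_sub_natCast (PNat.coe_injective.ne hkj)) hlam ha
  obtain ⟨B, hB⟩ := (isBoundedUnder_of_eventually_le hev).bddAbove_range_of_cofinite
  refine ⟨B, fun j k hkj => ?_⟩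
  have hkj' := one_le_abs_natCast_sub_natCast (PNat.coe_injective.ne hkj)
  push_cast
  rw [le_div_iff₀ (zero_lt_one.trans_le hkj'), mul_comm]
  exact hB ⟨(j, k), rfl⟩

theorem norm_mul_gapCoeff_eq {lam a : ℝ} (z : ℂ) (y x : ℝ) :
    ‖z * ((a + eigenvalue lam x : ℝ) : ℂ) /
        (((a + eigenvalue lam x - eigenvalue lam y : ℝ) : ℂ) * ((√2 * x * π : ℝ) : ℂ))‖
      = ‖z‖ * |gapCoeff lam a y x| := by
  rw [gapCoeff, mul_div_assoc, norm_mul, ← Complex.ofReal_mul, ← Complex.ofReal_div,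
    Complex.norm_real, Real.norm_eq_abs]

end

theorem stmt14_general (lam a : ℝ) (mu : ℕ+ → ℝ)
    (hmu : ∀ j : ℕ+, mu j = -(j : ℝ) ^ 4 * π ^ 4 + lam * (j : ℝ) ^ 2 * π ^ 2) :
    ∃ C > (0 : ℝ), ∀ c : ℕ+ → ℂ, Summable (fun k : ℕ+ => ‖c k‖ ^ 2) →
      ∀ j : ℕ+,
        Summable (fun k : {k : ℕ+ // k ≠ j} =>
          ‖c k * ((a + mu k : ℝ) : ℂ) /
            (((a + mu k - mu j : ℝ) : ℂ) * ((Real.sqrt 2 * ((k : ℕ+) : ℝ) * π : ℝ) : ℂ))‖) ∧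
        ‖∑' k : {k : ℕ+ // k ≠ j},
            c k * ((a + mu k : ℝ) : ℂ) /
              (((a + mu k - mu j : ℝ) : ℂ) *
                ((Real.sqrt 2 * ((k : ℕ+) : ℝ) * π : ℝ) : ℂ))‖
          ≤ C * Real.sqrt (∑' k : ℕ+, ‖c k‖ ^ 2) := by
  obtain rfl : mu = fun j : ℕ+ => eigenvalue lam j := funext hmu
  obtain ⟨B, hB⟩ := exists_abs_gapCoeff_le_div lam a
  refine ⟨max (|B| * √(∑' n : ℤ, 1 / (n : ℝ) ^ 2)) 1, by positivity, fun c hc j => ?_⟩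
  have hinj : Function.Injective fun k : {k : ℕ+ // k ≠ j} => ((k : ℕ) : ℤ) - (j : ℕ) :=
    fun k l h => Subtype.ext (PNat.coe_injective (by simpa using h))
  obtain ⟨hsum, hle⟩ := summable_mul_abs_and_tsum_le_of_abs_le_div hinj
    (fun k => norm_nonneg (c k)) (hc.comp_injective Subtype.val_injective) fun k => hB j k k.2
  simp only [norm_mul_gapCoeff_eq]
  refine ⟨hsum, (norm_tsum_le_tsum_norm (by simpa only [norm_mul_gapCoeff_eq] using hsum)).trans ?_⟩
  simp only [norm_mul_gapCoeff_eq]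
  refine hle.trans ?_
  gcongr
  · exact le_max_left _ _
  · exact hc.tsum_subtype_le _ {k | k ≠ j} fun _ => sq_nonneg _

/-- With μ_j := −j⁴π⁴ + λj²π² and a ∉ 𝒩₁, there is C > 0 such that for every ℓ²
sequence (ĉ_k) and every j, the series ∑_{k≠j} ĉ_k(a + μ_k)/((a + μ_k − μ_j)·√2kπ)
converges absolutely, with sum of absolute value at most C·(∑_k |ĉ_k|²)^{1/2}. -/
theorem stmt14 (lam a : ℝ) (mu : ℕ+ → ℝ)
    (hmu : ∀ j : ℕ+, mu j = -(j : ℝ) ^ 4 * π ^ 4 + lam * (j : ℝ) ^ 2 * π ^ 2)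
    (ha : a ∉ {x : ℝ | ∃ j k : ℕ+, x = mu k - mu j}) :
    ∃ C > (0 : ℝ), ∀ c : ℕ+ → ℂ, Summable (fun k : ℕ+ => ‖c k‖ ^ 2) →
      ∀ j : ℕ+,
        Summable (fun k : {k : ℕ+ // k ≠ j} =>
          ‖c k * ((a + mu k : ℝ) : ℂ) /
            (((a + mu k - mu j : ℝ) : ℂ) * ((Real.sqrt 2 * ((k : ℕ+) : ℝ) * π : ℝ) : ℂ))‖) ∧
        ‖∑' k : {k : ℕ+ // k ≠ j},
            c k * ((a + mu k : ℝ) : ℂ) /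
              (((a + mu k - mu j : ℝ) : ℂ) *
                ((Real.sqrt 2 * ((k : ℕ+) : ℝ) * π : ℝ) : ℂ))‖
          ≤ C * Real.sqrt (∑' k : ℕ+, ‖c k‖ ^ 2) :=
  stmt14_general lam a mu hmu
end

section
/- Let φ : [0,1] → ℝ be twice continuously differentiable with φ(0) = φ(1) = 0. Then φ'(0)² ≤ 2·∫₀¹ φ''(x)² dx + ∫₀¹ φ(x)² dx. -/
/-!
Writing `f(a)²` through the fundamental theorem of calculus for `(x - b) f(x)²` gives
`(b - a) f(a)² = ∫ f² + 2 (x - b) f f'`, and Young's inequality bounds the cross term, so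
`(b - a) f(a)² ≤ 2 ∫ f² + (b - a)² ∫ f'²`. Apply this to `f = φ'` on `[0, 1]`; since `φ`
vanishes at both ends, integration by parts gives `∫ φ'² = -∫ φ φ''`, and Young's inequality
once more yields `2 ∫ φ'² ≤ ∫ φ² + ∫ φ''²`.
-/

open Set intervalIntegral

section

variable {a b : ℝ} {f f' f'' : ℝ → ℝ}

theorem sub_mul_sq_eq_integral (hab : a ≤ b)
    (hf : ∀ x ∈ Icc a b, HasDerivWithinAt f (f' x) (Icc a b) x)
    (hf' : ContinuousOn f' (Icc a b)) :
    (b - a) * f a ^ 2 = ∫ x in a..b, f x ^ 2 + 2 * (x - b) * f x * f' x := by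
  have hderiv : ∀ x ∈ Icc a b, HasDerivWithinAt (fun x => (x - b) * f x ^ 2)
      (f x ^ 2 + 2 * (x - b) * f x * f' x) (Icc a b) x := fun x hx =>
    (((hasDerivWithinAt_id x _).sub_const b).mul ((hf x hx).fun_pow 2)).congr_deriv (by simp only [id]; ring)
  have hfc : ContinuousOn f (Icc a b) := fun x hx => (hf x hx).continuousWithinAt
  rw [integral_eq_sub_of_hasDerivAt_of_le hab (fun x hx => (hderiv x hx).continuousWithinAt)
    (fun x hx => (hderiv x (Ioo_subset_Icc_self hx)).hasDerivAt (Icc_mem_nhds hx.1 hx.2))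
    (ContinuousOn.intervalIntegrable_of_Icc hab (by fun_prop))]
  ring

theorem sub_mul_sq_le_integral (hab : a ≤ b)
    (hf : ∀ x ∈ Icc a b, HasDerivWithinAt f (f' x) (Icc a b) x)
    (hf' : ContinuousOn f' (Icc a b)) :
    (b - a) * f a ^ 2 ≤
      2 * (∫ x in a..b, f x ^ 2) + (b - a) ^ 2 * ∫ x in a..b, f' x ^ 2 := by
  have hfc : ContinuousOn f (Icc a b) := fun x hx => (hf x hx).continuousWithinAt
  rw [sub_mul_sq_eq_integral hab hf hf', ← integral_const_mul, ← integral_const_mul,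
    ← integral_add (ContinuousOn.intervalIntegrable_of_Icc hab (by fun_prop))
      (ContinuousOn.intervalIntegrable_of_Icc hab (by fun_prop))]
  refine integral_mono_on hab (ContinuousOn.intervalIntegrable_of_Icc hab (by fun_prop))
    (ContinuousOn.intervalIntegrable_of_Icc hab (by fun_prop)) fun x ⟨hax, hxb⟩ => ?_
  have hdist : (x - b) ^ 2 ≤ (b - a) ^ 2 := by nlinarith
  nlinarith [sq_nonneg (f x - (x - b) * f' x), mul_le_mul_of_nonneg_right hdist (sq_nonneg (f' x))]

theorem two_mul_integral_deriv_sq_le (hab : a ≤ b)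
    (hf : ∀ x ∈ Icc a b, HasDerivWithinAt f (f' x) (Icc a b) x)
    (hf' : ∀ x ∈ Icc a b, HasDerivWithinAt f' (f'' x) (Icc a b) x)
    (hf'' : ContinuousOn f'' (Icc a b)) (ha : f a = 0) (hb : f b = 0) :
    2 * ∫ x in a..b, f' x ^ 2 ≤ (∫ x in a..b, f x ^ 2) + ∫ x in a..b, f'' x ^ 2 := by
  have hfc : ContinuousOn f (Icc a b) := fun x hx => (hf x hx).continuousWithinAt
  have hf'c : ContinuousOn f' (Icc a b) := fun x hx => (hf' x hx).continuousWithinAt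
  have hparts : ∫ x in a..b, f' x ^ 2 = -∫ x in a..b, f x * f'' x := by
    rw [← uIcc_of_le hab] at hf hf'
    have := integral_mul_deriv_eq_deriv_mul_of_hasDerivWithinAt hf hf'
      (ContinuousOn.intervalIntegrable_of_Icc hab hf'c)
      (ContinuousOn.intervalIntegrable_of_Icc hab hf'')
    simp only [ha, hb, zero_mul, sub_zero, zero_sub] at this
    simp only [this, neg_neg, sq]
  rw [hparts, ← integral_add (ContinuousOn.intervalIntegrable_of_Icc hab (by fun_prop))
      (ContinuousOn.intervalIntegrable_of_Icc hab (by fun_prop)), mul_neg, ← integral_const_mul,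
    ← integral_neg]
  refine integral_mono_on hab (ContinuousOn.intervalIntegrable_of_Icc hab (by fun_prop))
    (ContinuousOn.intervalIntegrable_of_Icc hab (by fun_prop)) fun x _ => ?_
  nlinarith [sq_nonneg (f x + f'' x)]

end

/-- If φ : [0,1] → ℝ is C² with φ(0) = φ(1) = 0, then
φ'(0)² ≤ 2∫₀¹ φ''(x)² dx + ∫₀¹ φ(x)² dx. -/
theorem stmt17 (φ : ℝ → ℝ)
    (hφ : ContDiffOn ℝ 2 φ (Icc 0 1))
    (h0 : φ 0 = 0) (h1 : φ 1 = 0) :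
    (derivWithin φ (Icc 0 1) 0) ^ 2 ≤
      2 * (∫ x in (0 : ℝ)..1, (iteratedDerivWithin 2 φ (Icc 0 1) x) ^ 2)
        + ∫ x in (0 : ℝ)..1, (φ x) ^ 2 := by
  have hs : UniqueDiffOn ℝ (Icc (0 : ℝ) 1) := uniqueDiffOn_Icc one_pos
  have hφ' : ContDiffOn ℝ 1 (derivWithin φ (Icc 0 1)) (Icc 0 1) := hφ.derivWithin hs (by norm_num)
  have hderiv : ∀ x ∈ Icc (0 : ℝ) 1, HasDerivWithinAt φ (derivWithin φ (Icc 0 1) x) (Icc 0 1) x :=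
    fun x hx => (hφ.differentiableOn (by norm_num) x hx).hasDerivWithinAt
  have hderiv2 : ∀ x ∈ Icc (0 : ℝ) 1, HasDerivWithinAt (derivWithin φ (Icc 0 1))
      (iteratedDerivWithin 2 φ (Icc 0 1) x) (Icc 0 1) x := fun x hx => by
    rw [iteratedDerivWithin_succ', iteratedDerivWithin_one]
    exact (hφ'.differentiableOn one_ne_zero x hx).hasDerivWithinAt
  have hcont2 : ContinuousOn (iteratedDerivWithin 2 φ (Icc 0 1)) (Icc 0 1) :=
    hφ.continuousOn_iteratedDerivWithin le_rfl hs
  have htrace := sub_mul_sq_le_integral zero_le_one hderiv2 hcont2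
  have hparts := two_mul_integral_deriv_sq_le zero_le_one hderiv hderiv2 hcont2 h0 h1
  norm_num at htrace
  linarith
end

section
/- Let λ, a, ν' ∈ ℝ and suppose ν' ≤ a + j⁴π⁴ − λ j²π² for every positive integer j. Then for every twice continuously differentiable function φ : [0,1] → ℝ with φ(0) = φ(1) = 0 one has ∫₀¹ φ''(x)² dx − λ·∫₀¹ φ'(x)² dx + a·∫₀¹ φ(x)² dx ≥ ν'·∫₀¹ φ(x)² dx. -/
/-!
Extend `φ` oddly to `[-1, 1]` and expand it in a Fourier series there, i.e. in a sine series.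
The even extension of `φ'` and the odd extension of `φ''` are the successive right derivatives
of these extensions. Since `φ(0) = φ(1) = 0`, the odd extension of `φ` and the even extension of
`φ'` are continuous and `2`-periodic, so integration by parts multiplies the `n`-th coefficient
by `iπn` at each step (no boundary condition on `φ''` is needed). Parseval then turns the three
integrals into `∑ wₙ`, `∑ (nπ)² wₙ` and `∑ (nπ)⁴ wₙ` with `wₙ ≥ 0` and `w₀ = 0`, and
the hypothesis says exactly that `(nπ)⁴ - λ(nπ)² + a - ν' ≥ 0` for `n ≠ 0`.
-/

open Real Set Filter Topology MeasureTheory intervalIntegral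

/-- `s = -1` gives the odd and `s = 1` the even extension of `f` from `[0, ∞)` to `ℝ`. -/
noncomputable def reflectExtension (s : ℝ) (f : ℝ → ℝ) (x : ℝ) : ℝ :=
  if 0 ≤ x then f x else s * f (-x)

section ReflectExtension

variable {s b x : ℝ} {f f' : ℝ → ℝ}

@[simp]
lemma reflectExtension_of_nonneg (hx : 0 ≤ x) : reflectExtension s f x = f x := if_pos hx

@[simp]
lemma reflectExtension_of_neg (hx : x < 0) : reflectExtension s f x = s * f (-x) :=
  if_neg hx.not_ge

lemma reflectExtension_of_nonpos (h0 : s * f 0 = f 0) (hx : x ≤ 0) :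
    reflectExtension s f x = s * f (-x) := by
  rcases hx.lt_or_eq with hx | rfl
  · exact reflectExtension_of_neg hx
  · simp [h0]

lemma sq_reflectExtension :
    reflectExtension s f x ^ 2 = reflectExtension (s ^ 2) (fun y => f y ^ 2) x := by
  unfold reflectExtension
  split_ifs <;> ring

lemma continuousOn_const_mul_comp_neg (hf : ContinuousOn f (Icc 0 b)) :
    ContinuousOn (fun x => s * f (-x)) (Icc (-b) 0) :=
  continuousOn_const.mul
    (hf.comp continuousOn_neg fun _ hx => ⟨by linarith [hx.2], by linarith [hx.1]⟩)

lemma continuousOn_reflectExtension (hf : ContinuousOn f (Icc 0 b)) (h0 : s * f 0 = f 0) :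
    ContinuousOn (reflectExtension s f) (Icc (-b) b) := by
  have hneg : ContinuousOn (reflectExtension s f) (Icc (-b) 0) :=
    (continuousOn_const_mul_comp_neg hf).congr fun _ hx => reflectExtension_of_nonpos h0 hx.2
  have hpos : ContinuousOn (reflectExtension s f) (Icc 0 b) :=
    hf.congr fun _ hx => reflectExtension_of_nonneg hx.1
  rcases le_or_gt 0 b with hb | hb
  · rw [← Icc_union_Icc_eq_Icc (neg_nonpos.2 hb) hb]
    exact hneg.union_of_isClosed hpos isClosed_Icc isClosed_Icc
  · simp [Icc_eq_empty (by linarith : ¬-b ≤ b)]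

lemma memLp_reflectExtension (hf : ContinuousOn f (Icc 0 b)) (p : ENNReal) :
    MemLp (reflectExtension s f) p (volume.restrict (Ioc (-b) b)) := by
  obtain ⟨C, hC⟩ := isCompact_Icc.exists_bound_of_continuousOn hf
  have hsub : Ioc (-b) b ⊆ Ioo (-b) 0 ∪ Icc 0 b := fun x hx => by
    rcases lt_or_ge x 0 with h | h
    · exact Or.inl ⟨hx.1, h⟩
    · exact Or.inr ⟨h, hx.2⟩
  have hneg : ContinuousOn (reflectExtension s f) (Ioo (-b) 0) :=
    ((continuousOn_const_mul_comp_neg hf).mono Ioo_subset_Icc_self).congr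
      fun _ hx => reflectExtension_of_neg hx.2
  have hpos : ContinuousOn (reflectExtension s f) (Icc 0 b) :=
    hf.congr fun _ hx => reflectExtension_of_nonneg hx.1
  refine MemLp.of_bound (C := |s| * C + C) ?_ ?_
  · exact AEStronglyMeasurable.mono_set hsub (aestronglyMeasurable_union_iff.2
      ⟨hneg.aestronglyMeasurable measurableSet_Ioo,
        hpos.aestronglyMeasurable measurableSet_Icc⟩)
  · refine (ae_restrict_iff' measurableSet_Ioc).2 (Eventually.of_forall fun x hx => ?_)
    have hC0 : 0 ≤ C := (norm_nonneg _).trans (hC b ⟨by linarith [hx.1, hx.2], le_rfl⟩)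
    rcases lt_or_ge x 0 with h | h
    · rw [reflectExtension_of_neg h, norm_mul, Real.norm_eq_abs s]
      have := hC (-x) ⟨by linarith, by linarith [hx.1]⟩
      nlinarith [abs_nonneg s]
    · rw [reflectExtension_of_nonneg h]
      have := hC x ⟨h, hx.2⟩
      nlinarith [abs_nonneg s]

lemma intervalIntegrable_reflectExtension (hf : ContinuousOn f (Icc 0 b)) (hb : 0 ≤ b) :
    IntervalIntegrable (reflectExtension s f) volume (-b) b :=
  (intervalIntegrable_iff_integrableOn_Ioc_of_le (by linarith)).2
    (memLp_one_iff_integrable.1 (memLp_reflectExtension hf 1))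

lemma integral_reflectExtension (hf : ContinuousOn f (Icc 0 b)) (hb : 0 ≤ b) :
    ∫ x in -b..b, reflectExtension s f x = (1 + s) * ∫ x in 0..b, f x := by
  have hneg : ∫ x in -b..0, reflectExtension s f x = ∫ x in -b..0, s * f (-x) :=
    integral_congr_Ioo_of_le (neg_nonpos.2 hb) fun _ hx => reflectExtension_of_neg hx.2
  have hpos : ∫ x in 0..b, reflectExtension s f x = ∫ x in 0..b, f x :=
    integral_congr fun _ hx => reflectExtension_of_nonneg (by rw [uIcc_of_le hb] at hx; exact hx.1)
  have hint := intervalIntegrable_reflectExtension (s := s) hf hb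
  have h0 : (0 : ℝ) ∈ uIcc (-b) b := mem_uIcc.2 (Or.inl ⟨by linarith, hb⟩)
  have hint_neg : IntervalIntegrable _ volume (-b) 0 := hint.mono_set (uIcc_subset_uIcc_left h0)
  have hint_pos : IntervalIntegrable _ volume 0 b := hint.mono_set (uIcc_subset_uIcc_right h0)
  rw [← integral_add_adjacent_intervals hint_neg hint_pos, hneg, hpos,
    intervalIntegral.integral_const_mul, integral_comp_neg, neg_neg, neg_zero]
  ring

lemma hasDerivWithinAt_reflectExtension
    (hf : ∀ x ∈ Icc 0 b, HasDerivWithinAt f (f' x) (Icc 0 b) x) (hx : x ∈ Ioo (-b) b) :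
    HasDerivWithinAt (reflectExtension s f) (reflectExtension (-s) f' x) (Ioi x) x := by
  rcases lt_or_ge x 0 with h | h
  · have hmem : -x ∈ Ioo 0 b := ⟨by linarith, by linarith [hx.1]⟩
    have hd : HasDerivAt f (f' (-x)) (-x) :=
      (hf (-x) (Ioo_subset_Icc_self hmem)).hasDerivAt (Icc_mem_nhds hmem.1 hmem.2)
    have hd' : HasDerivAt (fun y => s * f (-y)) (-s * f' (-x)) x := by
      simpa [Function.comp_def] using (hd.comp x (hasDerivAt_neg x)).const_mul s
    have heq : reflectExtension s f =ᶠ[𝓝 x] fun y => s * f (-y) := by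
      filter_upwards [Iio_mem_nhds h] with y hy using reflectExtension_of_neg hy
    rw [reflectExtension_of_neg h]
    exact (hd'.congr_of_eventuallyEq heq).hasDerivWithinAt
  · rw [reflectExtension_of_nonneg h]
    exact ((hf x ⟨h, hx.2.le⟩).mono_of_mem_nhdsWithin
      (Icc_mem_nhdsGT_of_mem ⟨h, hx.2⟩)).congr
      (fun _ hy => reflectExtension_of_nonneg (h.trans hy.le)) (reflectExtension_of_nonneg h)

end ReflectExtension

theorem fourierCoeffOn_deriv_of_hasDeriv_right {a b : ℝ} (hab : a < b) {f f' : ℝ → ℂ}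
    (hf : ContinuousOn f (Icc a b)) (hff' : ∀ x ∈ Ioo a b, HasDerivWithinAt f (f' x) (Ioi x) x)
    (hf' : IntervalIntegrable f' volume a b) (hper : f a = f b) (n : ℤ) :
    fourierCoeffOn hab f' n = 2 * π * Complex.I * n / (b - a) * fourierCoeffOn hab f n := by
  rw [← uIcc_of_le hab.le] at hf
  replace hff' : ∀ x ∈ Ioo (min a b) (max a b), HasDerivWithinAt f (f' x) (Ioi x) x := by
    rwa [min_eq_left hab.le, max_eq_right hab.le]
  rcases eq_or_ne n 0 with rfl | hn
  · simp [fourierCoeffOn_eq_integral, integral_eq_sub_of_hasDeriv_right hf hff' hf', hper]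
  · have h := fourierCoeffOn_of_hasDeriv_right hab hn hf hff' hf'
    rw [hper, sub_self, mul_zero, zero_sub] at h
    have hba : ((b : ℂ) - a) ≠ 0 := by exact_mod_cast (sub_pos.2 hab).ne'
    have hn' : (n : ℂ) ≠ 0 := by exact_mod_cast hn
    rw [h]
    field_simp

lemma sq_norm_pi_mul_I_mul (n : ℤ) (b : ℝ) (z : ℂ) :
    ‖π * Complex.I * n / b * z‖ ^ 2 = (n * π / b) ^ 2 * ‖z‖ ^ 2 := by
  rw [show (π * Complex.I * n / b : ℂ) = ((n * π / b : ℝ) : ℂ) * Complex.I by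
      push_cast; ring,
    norm_mul, norm_mul, Complex.norm_I, Complex.norm_real, Real.norm_eq_abs, mul_one, mul_pow,
    sq_abs]

section FourierReflectExtension

variable {s b : ℝ} {f f' : ℝ → ℝ}

lemma hasSum_sq_fourierCoeffOn_reflectExtension (hb : 0 < b) (hs : s ^ 2 = 1)
    (hf : ContinuousOn f (Icc 0 b)) :
    HasSum (fun n => b *
        ‖fourierCoeffOn (neg_lt_self hb) (fun x => (reflectExtension s f x : ℂ)) n‖ ^ 2)
      (∫ x in 0..b, f x ^ 2) := by
  have hL2 : MemLp (fun x => (reflectExtension s f x : ℂ)) 2 (volume.restrict (Ioc (-b) b)) :=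
    (memLp_reflectExtension hf 2).ofReal
  have hval : b * ((b - -b)⁻¹ • ∫ x in -b..b, ‖(reflectExtension s f x : ℂ)‖ ^ 2)
      = ∫ x in 0..b, f x ^ 2 := by
    simp only [Complex.norm_real, Real.norm_eq_abs, sq_abs, sq_reflectExtension, hs, smul_eq_mul]
    rw [integral_reflectExtension (f := fun x => f x ^ 2) (hf.pow 2) hb.le]
    field_simp
    ring
  simpa only [hval] using (hasSum_sq_fourierCoeffOn (neg_lt_self hb) hL2).mul_left b

lemma fourierCoeffOn_reflectExtension_deriv (hb : 0 < b)
    (hf : ∀ x ∈ Icc 0 b, HasDerivWithinAt f (f' x) (Icc 0 b) x)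
    (hf' : ContinuousOn f' (Icc 0 b)) (h0 : s * f 0 = f 0) (hb' : s * f b = f b) (n : ℤ) :
    fourierCoeffOn (neg_lt_self hb) (fun x => (reflectExtension (-s) f' x : ℂ)) n
      = π * Complex.I * n / b
        * fourierCoeffOn (neg_lt_self hb) (fun x => (reflectExtension s f x : ℂ)) n := by
  have hfc : ContinuousOn f (Icc 0 b) := fun x hx => (hf x hx).continuousWithinAt
  have hint := intervalIntegrable_reflectExtension (s := -s) hf' hb.le
  rw [fourierCoeffOn_deriv_of_hasDeriv_right (neg_lt_self hb)
    (f := fun x => (reflectExtension s f x : ℂ))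
    (Complex.continuous_ofReal.comp_continuousOn (continuousOn_reflectExtension hfc h0))
    (fun x hx => (hasDerivWithinAt_reflectExtension hf hx).ofReal_comp)
    ⟨hint.1.ofReal, hint.2.ofReal⟩
    (by rw [reflectExtension_of_neg (by linarith), neg_neg, hb',
      reflectExtension_of_nonneg hb.le])]
  have hb0 : (b : ℂ) ≠ 0 := by exact_mod_cast hb.ne'
  push_cast
  field_simp
  ring

lemma fourierCoeffOn_reflectExtension_neg_one_zero (hb : 0 < b) (hf : ContinuousOn f (Icc 0 b)) :
    fourierCoeffOn (neg_lt_self hb) (fun x => (reflectExtension (-1) f x : ℂ)) 0 = 0 := by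
  simp [fourierCoeffOn_eq_integral, integral_ofReal, integral_reflectExtension hf hb.le]

end FourierReflectExtension

theorem exists_sine_parseval_of_contDiffOn {φ : ℝ → ℝ} {b : ℝ} (hb : 0 < b)
    (hφ : ContDiffOn ℝ 2 φ (Icc 0 b)) (hφ0 : φ 0 = 0) (hφb : φ b = 0) :
    ∃ w : ℤ → ℝ, (∀ n, 0 ≤ w n) ∧ w 0 = 0 ∧ HasSum w (∫ x in 0..b, φ x ^ 2) ∧
      HasSum (fun n => (n * π / b) ^ 2 * w n) (∫ x in 0..b, derivWithin φ (Icc 0 b) x ^ 2) ∧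
      HasSum (fun n => (n * π / b) ^ 4 * w n)
        (∫ x in 0..b, iteratedDerivWithin 2 φ (Icc 0 b) x ^ 2) := by
  have hUD : UniqueDiffOn ℝ (Icc 0 b) := uniqueDiffOn_Icc hb
  set d := derivWithin φ (Icc 0 b)
  have he_eq : iteratedDerivWithin 2 φ (Icc 0 b) = derivWithin d (Icc 0 b) := by
    rw [iteratedDerivWithin_succ, iteratedDerivWithin_one]
  set e := iteratedDerivWithin 2 φ (Icc 0 b)
  have hd : ContDiffOn ℝ 1 d (Icc 0 b) := hφ.derivWithin hUD (by norm_num)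
  have hφd : ∀ x ∈ Icc 0 b, HasDerivWithinAt φ (d x) (Icc 0 b) x := fun x hx =>
    (hφ.differentiableOn (by norm_num) x hx).hasDerivWithinAt
  have hde : ∀ x ∈ Icc 0 b, HasDerivWithinAt d (e x) (Icc 0 b) x := by
    rw [he_eq]
    exact fun x hx => (hd.differentiableOn (by norm_num) x hx).hasDerivWithinAt
  have he : ContinuousOn e (Icc 0 b) := hφ.continuousOn_iteratedDerivWithin le_rfl hUD
  set c := fourierCoeffOn (neg_lt_self hb) (fun x => (reflectExtension (-1) φ x : ℂ))
  set c' := fourierCoeffOn (neg_lt_self hb) (fun x => (reflectExtension 1 d x : ℂ))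
  have hc' : ∀ n : ℤ, c' n = π * Complex.I * n / b * c n := by
    simpa only [neg_neg] using fourierCoeffOn_reflectExtension_deriv (s := -1) hb hφd
      hd.continuousOn (by simp [hφ0]) (by simp [hφb])
  have hc'' : ∀ n : ℤ,
      fourierCoeffOn (neg_lt_self hb) (fun x => (reflectExtension (-1) e x : ℂ)) n
        = π * Complex.I * n / b * c' n :=
    fourierCoeffOn_reflectExtension_deriv hb hde he (one_mul _) (one_mul _)
  refine ⟨fun n => b * ‖c n‖ ^ 2, fun n => by positivity,
    by simp [c, fourierCoeffOn_reflectExtension_neg_one_zero hb hφ.continuousOn],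
    hasSum_sq_fourierCoeffOn_reflectExtension hb (by norm_num) hφ.continuousOn, ?_, ?_⟩
  · convert hasSum_sq_fourierCoeffOn_reflectExtension (s := 1) hb (by norm_num) hd.continuousOn
      using 2 with n
    show _ * (b * ‖c n‖ ^ 2) = b * ‖c' n‖ ^ 2
    rw [hc', sq_norm_pi_mul_I_mul]
    ring
  · convert hasSum_sq_fourierCoeffOn_reflectExtension (s := -1) hb (by norm_num) he using 2 with n
    rw [hc'', sq_norm_pi_mul_I_mul, hc', sq_norm_pi_mul_I_mul]
    ring

/-- If ν' ≤ a + j⁴π⁴ − λj²π² for every positive integer j, then for every C² function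
φ : [0,1] → ℝ with φ(0) = φ(1) = 0 one has
∫₀¹ φ''² − λ∫₀¹ φ'² + a∫₀¹ φ² ≥ ν'∫₀¹ φ². -/
theorem stmt18 (lam a ν' : ℝ)
    (hν' : ∀ j : ℕ+, ν' ≤ a + (j : ℝ) ^ 4 * π ^ 4 - lam * (j : ℝ) ^ 2 * π ^ 2)
    (φ : ℝ → ℝ) (hφ : ContDiffOn ℝ 2 φ (Icc 0 1))
    (h0 : φ 0 = 0) (h1 : φ 1 = 0) :
    (∫ x in (0 : ℝ)..1, (iteratedDerivWithin 2 φ (Icc 0 1) x) ^ 2)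
        - lam * (∫ x in (0 : ℝ)..1, (derivWithin φ (Icc 0 1) x) ^ 2)
        + a * (∫ x in (0 : ℝ)..1, (φ x) ^ 2)
      ≥ ν' * ∫ x in (0 : ℝ)..1, (φ x) ^ 2 := by
  obtain ⟨w, hw, hw0, hsum0, hsum1, hsum2⟩ :=
    exists_sine_parseval_of_contDiffOn one_pos hφ h0 h1
  simp only [div_one] at hsum1 hsum2
  have hterm (n : ℤ) : lam * ((n * π) ^ 2 * w n) + (ν' - a) * w n ≤ (n * π) ^ 4 * w n := by
    rcases eq_or_ne n 0 with rfl | hn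
    · simp [hw0]
    · have hj := hν' ⟨n.natAbs, Int.natAbs_pos.2 hn⟩
      rw [PNat.mk_coe, Nat.cast_natAbs, Int.cast_abs, sq_abs,
        Even.pow_abs (by decide : Even 4)] at hj
      nlinarith [mul_le_mul_of_nonneg_right hj (hw n)]
  have hcompare := hasSum_le hterm ((hsum1.mul_left lam).add (hsum0.mul_left (ν' - a))) hsum2
  linarith
end

section
/- Let ν, ν' ∈ ℝ with 0 < ν < ν' and Ĉ ≥ 0. Suppose y : [0,∞) → [0,∞) is differentiable, satisfies y'(t) ≤ −2ν'·y(t) + Ĉ·y(t)^{3/2} for every t ≥ 0, and Ĉ·√(y(0)) ≤ 2(ν' − ν). Then y(t) ≤ e^{−2νt}·y(0) for every t ≥ 0. -/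
open Real Set

/-- Nonlinear Grönwall-type lemma: if 0 < ν < ν', Ĉ ≥ 0, y : [0,∞) → [0,∞) is
differentiable with y' ≤ −2ν'y + Ĉ·y^{3/2} on [0,∞) and Ĉ·√(y(0)) ≤ 2(ν' − ν),
then y(t) ≤ e^{−2νt} y(0) for all t ≥ 0. -/
theorem stmt19 (ν ν' C : ℝ) (hν : 0 < ν) (hνν' : ν < ν') (hC : 0 ≤ C)
    (y y' : ℝ → ℝ)
    (hy : ∀ t ∈ Ici (0 : ℝ), 0 ≤ y t)
    (hderiv : ∀ t ∈ Ici (0 : ℝ), HasDerivWithinAt y (y' t) (Ici 0) t)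
    (hineq : ∀ t ∈ Ici (0 : ℝ), y' t ≤ -2 * ν' * y t + C * (y t) ^ ((3 : ℝ) / 2))
    (hinit : C * Real.sqrt (y 0) ≤ 2 * (ν' - ν)) :
    ∀ t ∈ Ici (0 : ℝ), y t ≤ Real.exp (-2 * ν * t) * y 0 := by
  have hy0 : 0 ≤ y 0 := hy 0 (mem_Ici.2 le_rfl)
  -- rewrite the 3/2 power
  have hrpow : ∀ s ∈ Ici (0 : ℝ), (y s) ^ ((3 : ℝ) / 2) = y s * Real.sqrt (y s) := by
    intro s hs
    have h0 : 0 ≤ y s := hy s hs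
    have : ((3 : ℝ) / 2) = 1 + 1 / 2 := by norm_num
    rw [this, Real.rpow_one_add' h0 (by norm_num), Real.sqrt_eq_rpow]
  have hkey : ∀ s ∈ Ici (0 : ℝ), y' s ≤ y s * (C * Real.sqrt (y s) - 2 * ν') := by
    intro s hs
    have := hineq s hs
    rw [hrpow s hs] at this
    nlinarith [this]
  -- continuity and right-derivative facts on intervals
  have hcont : ∀ t : ℝ, ContinuousOn y (Icc 0 t) := by
    intro t x hx
    exact ((hderiv x hx.1).continuousWithinAt).mono (fun z hz => hz.1)
  have hderiv' : ∀ t : ℝ, ∀ x ∈ Ico (0 : ℝ) t, HasDerivWithinAt y (y' x) (Ici x) x := by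
    intro t x hx
    exact (hderiv x hx.1).mono (Ici_subset_Ici.2 hx.1)
  -- Step 1: y t ≤ y 0 for all t ≥ 0
  have hmono : ∀ t ∈ Ici (0 : ℝ), y t ≤ y 0 := by
    intro t ht
    refine le_of_forall_pos_le_add ?_
    intro ε hε
    obtain ⟨ε', hε'pos, hε'le, hε'C⟩ :
        ∃ ε' > 0, ε' ≤ ε ∧ C * Real.sqrt (y 0 + ε') < 2 * ν' := by
      rcases eq_or_lt_of_le hC with hC0 | hC0
      · exact ⟨ε, hε, le_refl ε, by rw [← hC0]; nlinarith⟩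
      · have hs0 : Real.sqrt (y 0) < 2 * ν' / C := by
          rw [lt_div_iff₀ hC0]
          nlinarith
        have hy0lt : y 0 < (2 * ν' / C) ^ 2 := by
          nlinarith [Real.sq_sqrt hy0, Real.sqrt_nonneg (y 0), div_pos (by nlinarith : (0:ℝ) < 2*ν') hC0]
        refine ⟨min ε (((2 * ν' / C) ^ 2 - y 0) / 2), lt_min hε (by linarith), min_le_left _ _, ?_⟩
        have h1 : y 0 + min ε (((2 * ν' / C) ^ 2 - y 0) / 2) < (2 * ν' / C) ^ 2 := by
          have := min_le_right ε (((2 * ν' / C) ^ 2 - y 0) / 2)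
          nlinarith
        have h2 : Real.sqrt (y 0 + min ε (((2 * ν' / C) ^ 2 - y 0) / 2)) < 2 * ν' / C :=
          (Real.sqrt_lt' (div_pos (by linarith) hC0)).2 h1
        calc C * Real.sqrt (y 0 + min ε (((2 * ν' / C) ^ 2 - y 0) / 2))
            < C * (2 * ν' / C) := by exact mul_lt_mul_of_pos_left h2 hC0
          _ = 2 * ν' := by field_simp
    have hfence : ∀ x ∈ Icc (0 : ℝ) t, y x ≤ y 0 + ε' := by
      have := image_le_of_deriv_right_lt_deriv_boundary' (f := y) (f' := y') (a := 0) (b := t)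
        (hcont t) (hderiv' t) (B := fun _ => y 0 + ε') (B' := fun _ => 0)
        (show y 0 ≤ y 0 + ε' by linarith) continuousOn_const (fun x _ => hasDerivWithinAt_const x _ _)
        ?_
      · exact fun x hx => this hx
      · intro x hx hxb
        have hx0 : x ∈ Ici (0 : ℝ) := hx.1
        have hyx : y x = y 0 + ε' := hxb
        have hpos : 0 < y x := by rw [hyx]; linarith
        have := hkey x hx0
        have hsq : C * Real.sqrt (y x) < 2 * ν' := by rw [hyx]; exact hε'C
        calc y' x ≤ y x * (C * Real.sqrt (y x) - 2 * ν') := this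
          _ < 0 := mul_neg_of_pos_of_neg hpos (by linarith)
    have := hfence t ⟨ht, le_refl t⟩
    linarith
  -- Step 2: exponential decay via g t = y t * exp (2 ν t)
  intro t ht
  set g : ℝ → ℝ := fun s => y s * Real.exp (2 * ν * s) with hg
  have hgd : ∀ x ∈ Ico (0 : ℝ) t,
      HasDerivWithinAt g (y' x * Real.exp (2 * ν * x) + y x * (Real.exp (2 * ν * x) * (2 * ν)))
        (Ici x) x := by
    intro x hx
    have he : HasDerivAt (fun s : ℝ => Real.exp (2 * ν * s)) (Real.exp (2 * ν * x) * (2 * ν)) x := by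
      have : HasDerivAt (fun s : ℝ => 2 * ν * s) (2 * ν) x := by
        simpa using (hasDerivAt_id x).const_mul (2 * ν)
      exact this.exp
    exact (hderiv' t x hx).mul (he.hasDerivWithinAt.mono (fun z _ => trivial))
  have hgcont : ContinuousOn g (Icc 0 t) :=
    (hcont t).mul (Real.continuous_exp.comp (continuous_const.mul continuous_id)).continuousOn
  have hfence : ∀ x ∈ Icc (0 : ℝ) t, g x ≤ y 0 := by
    have := image_le_of_deriv_right_le_deriv_boundary (a := 0) (b := t)
      hgcont hgd (B := fun _ => y 0) (B' := fun _ => 0)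
      (by simp [hg]) continuousOn_const (fun x _ => hasDerivWithinAt_const x _ _) ?_
    · exact fun x hx => this hx
    · intro x hx
      have hx0 : x ∈ Ici (0 : ℝ) := hx.1
      have hyx : 0 ≤ y x := hy x hx0
      have h1 : y' x ≤ y x * (C * Real.sqrt (y x) - 2 * ν') := hkey x hx0
      have h2 : C * Real.sqrt (y x) ≤ 2 * (ν' - ν) := by
        calc C * Real.sqrt (y x) ≤ C * Real.sqrt (y 0) :=
              mul_le_mul_of_nonneg_left (Real.sqrt_le_sqrt (hmono x hx0)) hC
          _ ≤ 2 * (ν' - ν) := hinit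
      have hE : 0 < Real.exp (2 * ν * x) := Real.exp_pos _
      show y' x * Real.exp (2 * ν * x) + y x * (Real.exp (2 * ν * x) * (2 * ν)) ≤ 0
      nlinarith [mul_le_mul_of_nonneg_right h1 hE.le, mul_nonneg hyx hE.le,
        mul_le_mul_of_nonneg_right h2 (mul_nonneg hyx hE.le)]
  have hgt : y t * Real.exp (2 * ν * t) ≤ y 0 := hfence t ⟨ht, le_refl t⟩
  have hE : 0 < Real.exp (2 * ν * t) := Real.exp_pos _
  have : Real.exp (-2 * ν * t) = (Real.exp (2 * ν * t))⁻¹ := by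
    rw [← Real.exp_neg]; ring_nf
  rw [this, ← div_eq_inv_mul, le_div_iff₀ hE]
  exact hgt
end
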